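/- arXiv:2010.10794 — 10 statements merged into one kernel-verified Lean document; each statement's English description precedes it below -/
import Mathlib

section
/- Fix ε > 0. The ambiguity cost A(ε; f) := max_{q ∈ Q(ε)} Σᵢ qᵢ (fᵢ − E_p(f)) is a generalized measure of deviation of f; that is: (i) A(ε; f) ≥ 0, and A(ε; f) = 0 if and only if f is a constant vector; (ii) A(ε; βf) = β·A(ε; f) for every constant β ≥ 0; (iii) A(ε; α·𝟙 + f) = A(ε; f) for every constant α ∈ ℝ, where 𝟙 denotes the all-ones vector. -/
/-- the ambiguity cost `A(ε; f) = max_{q ∈ Q(ε)} Σᵢ qᵢ (fᵢ − E_p f)`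
is a generalized measure of deviation. -/
theorem stmt0 (n : ℕ) (hn : 1 ≤ n) (p : Fin n → ℝ)
    (hp1 : ∑ i, p i = 1) (hp : ∀ i, 0 < p i)
    (d : (Fin n → ℝ) → ℝ) (hd : ConvexOn ℝ Set.univ d) (hdc : Continuous d)
    (hdp : d p = 0) (ε : ℝ) (hε : 0 < ε) :
    let Q : Set (Fin n → ℝ) :=
      {q | (∑ i, q i = 1 ∧ ∀ i, 0 ≤ q i) ∧ d q ≤ ε}
    let A : (Fin n → ℝ) → ℝ :=
      fun f => sSup ((fun q => ∑ i, q i * (f i - ∑ j, p j * f j)) '' Q)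
    (∀ f : Fin n → ℝ, 0 ≤ A f ∧ (A f = 0 ↔ ∃ c : ℝ, ∀ i, f i = c)) ∧
    (∀ (f : Fin n → ℝ) (β : ℝ), 0 ≤ β → A (fun i => β * f i) = β * A f) ∧
    (∀ (f : Fin n → ℝ) (α : ℝ), A (fun i => α + f i) = A f) := by
  intro Q A
  have hpQ : p ∈ Q := ⟨⟨hp1, fun i => (hp i).le⟩, by rw [hdp]; exact hε.le⟩
  have hQne : Q.Nonempty := ⟨p, hpQ⟩
  -- boundedness of the image set
  have hbdd : ∀ f : Fin n → ℝ,
      BddAbove ((fun q => ∑ i, q i * (f i - ∑ j, p j * f j)) '' Q) := by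
    intro f
    refine ⟨∑ i, |f i - ∑ j, p j * f j|, ?_⟩
    rintro y ⟨q, hq, rfl⟩
    refine Finset.sum_le_sum fun i _ => ?_
    have h0 : 0 ≤ q i := hq.1.2 i
    have h1 : q i ≤ 1 := by
      rw [← hq.1.1]
      exact Finset.single_le_sum (fun j _ => hq.1.2 j) (Finset.mem_univ i)
    calc q i * (f i - ∑ j, p j * f j) ≤ q i * |f i - ∑ j, p j * f j| :=
          mul_le_mul_of_nonneg_left (le_abs_self _) h0
      _ ≤ 1 * |f i - ∑ j, p j * f j| :=
          mul_le_mul_of_nonneg_right h1 (abs_nonneg _)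
      _ = |f i - ∑ j, p j * f j| := one_mul _
  -- value at p is 0
  have hgp : ∀ f : Fin n → ℝ, (∑ i, p i * (f i - ∑ j, p j * f j)) = 0 := by
    intro f
    simp only [mul_sub, Finset.sum_sub_distrib, ← Finset.sum_mul, hp1, one_mul, sub_self]
  have hA0 : ∀ f : Fin n → ℝ, 0 ≤ A f := by
    intro f
    have := le_csSup (hbdd f) ⟨p, hpQ, hgp f⟩
    simpa [hgp f] using this
  refine ⟨fun f => ⟨hA0 f, ?_, ?_⟩, ?_, ?_⟩
  · -- A f = 0 → f constant
    intro hAf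
    obtain ⟨i0⟩ : Nonempty (Fin n) := Fin.pos_iff_nonempty.mp hn
    -- continuity: a δ-ball around p stays in the level set
    obtain ⟨δ, hδ, hball⟩ : ∃ δ > 0, ∀ q : Fin n → ℝ, dist q p < δ → d q ≤ ε := by
      obtain ⟨δ, hδ, h⟩ := Metric.continuousAt_iff.mp hdc.continuousAt ε hε
      exact ⟨δ, hδ, fun q hq => by
        have := h hq
        rw [Real.dist_eq, hdp, sub_zero] at this
        exact le_of_lt (lt_of_le_of_lt (le_abs_self _) this)⟩
    have hle : ∀ i j : Fin n, f i ≤ f j := by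
      intro i j
      rcases eq_or_ne i j with rfl | hij
      · exact le_refl _
      set t : ℝ := min (p j) (δ / 2) with ht
      have ht0 : 0 < t := lt_min (hp j) (half_pos hδ)
      have htpj : t ≤ p j := min_le_left _ _
      set q : Fin n → ℝ := fun k =>
        p k + (if k = i then t else 0) - (if k = j then t else 0) with hqdef
      have hq1 : ∑ k, q k = 1 := by
        simp [q, Finset.sum_add_distrib, Finset.sum_sub_distrib, hp1]
      have hqnn : ∀ k, 0 ≤ q k := by
        intro k
        simp only [q]
        rcases eq_or_ne k i with rfl | hki
        · rw [if_pos rfl, if_neg hij]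
          linarith [hp k, ht0]
        rcases eq_or_ne k j with rfl | hkj
        · rw [if_neg hki, if_pos rfl]
          linarith [htpj]
        · rw [if_neg hki, if_neg hkj]
          linarith [hp k]
      have hdq : d q ≤ ε := by
        apply hball
        rw [dist_pi_lt_iff hδ]
        intro k
        simp only [q, Real.dist_eq]
        rcases eq_or_ne k i with rfl | hki
        · rw [if_pos rfl, if_neg hij]
          have : |p k + t + -0 - p k| = t := by rw [abs_of_nonneg] <;> [skip; skip] <;> · ring_nf; try positivity
          calc |p k + t - 0 - p k| = t := by rw [show p k + t - 0 - p k = t by ring, abs_of_nonneg ht0.le]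
            _ ≤ δ / 2 := min_le_right _ _
            _ < δ := half_lt_self hδ
        rcases eq_or_ne k j with rfl | hkj
        · rw [if_neg hki, if_pos rfl]
          calc |p k + 0 - t - p k| = t := by rw [show p k + 0 - t - p k = -t by ring, abs_neg, abs_of_nonneg ht0.le]
            _ ≤ δ / 2 := min_le_right _ _
            _ < δ := half_lt_self hδ
        · rw [if_neg hki, if_neg hkj]
          simpa using hδ
      have hqQ : q ∈ Q := ⟨⟨hq1, hqnn⟩, hdq⟩
      have hval : (∑ k, q k * (f k - ∑ j, p j * f j)) = t * (f i - f j) := by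
        simp only [q, add_mul, sub_mul, ite_mul, zero_mul,
          Finset.sum_sub_distrib, Finset.sum_add_distrib,
          Finset.sum_ite_eq', Finset.mem_univ, if_true, hgp f]
        ring
      have hle' : t * (f i - f j) ≤ A f := by
        rw [← hval]
        exact le_csSup (hbdd f) ⟨q, hqQ, rfl⟩
      rw [hAf] at hle'
      nlinarith
    exact ⟨f i0, fun i => le_antisymm (hle i i0) (hle i0 i)⟩
  · -- f constant → A f = 0
    rintro ⟨c, hc⟩
    have hE : (∑ j, p j * f j) = c := by
      simp [hc, ← Finset.sum_mul, hp1]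
    have himg : (fun q : Fin n → ℝ => ∑ i, q i * (f i - ∑ j, p j * f j)) '' Q = {0} := by
      have : ∀ q ∈ Q, (∑ i, q i * (f i - ∑ j, p j * f j)) = 0 := by
        intro q hq
        simp [hc, ← Finset.sum_mul, hp1]
      rw [Set.image_congr this]
      exact Set.Nonempty.image_const hQne 0
    simp only [A, himg, csSup_singleton]
  · -- positive homogeneity
    intro f β hβ
    have hE : (∑ j, p j * (β * f j)) = β * ∑ j, p j * f j := by
      rw [Finset.mul_sum]; exact Finset.sum_congr rfl fun j _ => by ring
    have himg : (fun q : Fin n → ℝ => ∑ i, q i * (β * f i - ∑ j, p j * (β * f j))) '' Q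
        = (fun x => β * x) '' ((fun q : Fin n → ℝ => ∑ i, q i * (f i - ∑ j, p j * f j)) '' Q) := by
      rw [Set.image_image]
      apply Set.image_congr
      intro q _
      rw [hE]
      conv_rhs => rw [Finset.mul_sum]
      exact Finset.sum_congr rfl fun i _ => by ring
    simp only [A]
    rw [himg]
    exact (Monotone.map_csSup_of_continuousAt (continuous_const.mul continuous_id).continuousAt
      (fun a b hab => mul_le_mul_of_nonneg_left hab hβ)
      (hQne.image _) (hbdd f)).symm
  · -- translation invariance
    intro f α
    have hE : (∑ j, p j * (α + f j)) = α + ∑ j, p j * f j := by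
      simp [mul_add, Finset.sum_add_distrib, ← Finset.sum_mul, hp1]
    simp only [A]
    congr 1
    apply Set.image_congr
    intro q _
    rw [hE]
    exact Finset.sum_congr rfl fun i _ => by ring
end

section
/- Let φ : [0, ∞) → ℝ be strictly convex, twice continuously differentiable on (0, ∞), with φ(1) = 0, φ′(1) = 0 and φ″(1) > 0. Let f ∈ ℝⁿ be nonconstant and define the worst-case value V_φ(ε) := max{Σᵢ qᵢ fᵢ : q ∈ Δₙ, Σᵢ pᵢ φ(qᵢ/pᵢ) ≤ ε} for ε ≥ 0. Then lim_{ε ↓ 0} (V_φ(ε) − E_p(f)) / √ε = √(2 V_p(f) / φ″(1)). -/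
/-!
Write `E = E_p f`, `V = V_p f` and `κ = φ''(1)`. By Taylor's theorem, for every `η > 0` the
divergence `φ` lies between `(κ - η)/2 · (t - 1)²` and `(κ + η)/2 · (t - 1)²` near `t = 1`.

Lower bound: the tilted vector `q = p (1 + t (f - E))` is a probability vector for small `t`, its
divergence is at most `(κ + η)/2 · t² V`, and it achieves `E + t V`; choosing
`t = √(2ε / ((κ + η) V))` gives `V_φ(ε) - E ≥ √ε · √(2V / (κ + η))`.

Upper bound: by convexity and `φ(1) = 0`, `φ` stays at least `(κ - η)/2 · δ²` outside
`[1 - δ, 1 + δ]`, so for small `ε` every likelihood ratio `qᵢ / pᵢ` of a feasible `q` lies in that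
interval. Hence the χ²-distance `∑ pᵢ (qᵢ/pᵢ - 1)²` is at most `2ε / (κ - η)`, and Cauchy–Schwarz
applied to `∑ qᵢ fᵢ - E = ∑ pᵢ (qᵢ/pᵢ - 1)(fᵢ - E)` gives `V_φ(ε) - E ≤ √ε · √(2V / (κ - η))`.
Letting `η → 0` yields the limit.
-/

open Set Filter Topology Asymptotics

theorem isLittleO_sub_taylor_two {φ : ℝ → ℝ} {x₀ : ℝ} {s : Set ℝ} (hs : s ∈ 𝓝 x₀)
    (hφ : ContDiffOn ℝ 2 φ s) :
    (fun x => φ x - (φ x₀ + deriv φ x₀ * (x - x₀) + deriv (deriv φ) x₀ / 2 * (x - x₀) ^ 2))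
      =o[𝓝 x₀] fun x => (x - x₀) ^ 2 := by
  obtain ⟨r, hr, hball⟩ := Metric.mem_nhds_iff.1 hs
  have hx₀ := Metric.mem_ball_self (x := x₀) hr
  have h := taylor_isLittleO (n := 2) (convex_ball x₀ r) hx₀ (hφ.mono hball)
  rw [Metric.isOpen_ball.nhdsWithin_eq hx₀] at h
  refine h.congr_left fun x => ?_
  have hit : ∀ k, iteratedDerivWithin k φ (Metric.ball x₀ r) x₀ = deriv^[k] φ x₀ := fun k =>
    iteratedDerivWithin_of_isOpen_eq_iterate Metric.isOpen_ball hx₀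
  simp [taylor_within_apply, hit]
  ring

theorem eventually_quadratic_bounds {φ : ℝ → ℝ} {x₀ κ η : ℝ}
    (h : (fun x => φ x - κ / 2 * (x - x₀) ^ 2) =o[𝓝 x₀] fun x => (x - x₀) ^ 2) (hη : 0 < η) :
    ∀ᶠ x in 𝓝 x₀, (κ - η) / 2 * (x - x₀) ^ 2 ≤ φ x ∧ φ x ≤ (κ + η) / 2 * (x - x₀) ^ 2 := by
  filter_upwards [h.bound (half_pos hη)] with x hx
  simp only [Real.norm_eq_abs, abs_pow, sq_abs, abs_le] at hx
  constructor <;> linarith [hx.1, hx.2]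

namespace PhiDivergence

variable {ι : Type*} [Fintype ι]

def mean (p f : ι → ℝ) : ℝ := ∑ i, p i * f i

def variance (p f : ι → ℝ) : ℝ := ∑ i, p i * (f i - mean p f) ^ 2

def ball (p : ι → ℝ) (φ : ℝ → ℝ) (ε : ℝ) : Set (ι → ℝ) :=
  {q | (∑ i, q i = 1 ∧ ∀ i, 0 ≤ q i) ∧ ∑ i, p i * φ (q i / p i) ≤ ε}

noncomputable def worstCase (p f : ι → ℝ) (φ : ℝ → ℝ) (ε : ℝ) : ℝ :=
  sSup ((fun q => ∑ i, q i * f i) '' ball p φ ε)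

variable {p f q : ι → ℝ} {φ : ℝ → ℝ} {ε : ℝ}

theorem variance_nonneg (hp : ∀ i, 0 ≤ p i) : 0 ≤ variance p f :=
  Finset.sum_nonneg fun i _ => mul_nonneg (hp i) (sq_nonneg _)

theorem variance_pos (hp : ∀ i, 0 < p i) (hf : ∃ i j, f i ≠ f j) : 0 < variance p f := by
  obtain ⟨i, j, hij⟩ := hf
  have hk : ∃ k, f k ≠ mean p f := by
    by_contra! h
    exact hij ((h i).trans (h j).symm)
  obtain ⟨k, hk⟩ := hk
  exact Finset.sum_pos' (fun i _ => mul_nonneg (hp i).le (sq_nonneg _))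
    ⟨k, Finset.mem_univ k, mul_pos (hp k) (pow_two_pos_of_ne_zero (sub_ne_zero.2 hk))⟩

theorem sum_mul_sub_mean_eq_zero (hp1 : ∑ i, p i = 1) : ∑ i, p i * (f i - mean p f) = 0 := by
  simp only [mul_sub, Finset.sum_sub_distrib, ← Finset.sum_mul, hp1, one_mul, mean]
  ring

theorem mem_ball_self (hp : ∀ i, 0 < p i) (hp1 : ∑ i, p i = 1) (hφ1 : φ 1 = 0) (hε : 0 ≤ ε) :
    p ∈ ball p φ ε :=
  ⟨⟨hp1, fun i => (hp i).le⟩, by simpa [div_self (hp _).ne', hφ1] using hε⟩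

theorem bddAbove_image_ball (f : ι → ℝ) : BddAbove ((fun q => ∑ i, q i * f i) '' ball p φ ε) := by
  refine ⟨∑ j, |f j|, ?_⟩
  rintro _ ⟨q, ⟨⟨hq1, hq0⟩, -⟩, rfl⟩
  calc ∑ i, q i * f i ≤ ∑ i, q i * ∑ j, |f j| := by
        gcongr with i
        · exact hq0 i
        · exact (le_abs_self _).trans (Finset.single_le_sum (fun j _ => abs_nonneg (f j))
            (Finset.mem_univ i))
    _ = ∑ j, |f j| := by rw [← Finset.sum_mul, hq1, one_mul]

theorem le_worstCase (hq : q ∈ ball p φ ε) : ∑ i, q i * f i ≤ worstCase p f φ ε :=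
  le_csSup (bddAbove_image_ball f) ⟨q, hq, rfl⟩

theorem worstCase_le (hp : ∀ i, 0 < p i) (hp1 : ∑ i, p i = 1) (hφ1 : φ 1 = 0) (hε : 0 ≤ ε)
    {B : ℝ} (hB : ∀ q ∈ ball p φ ε, ∑ i, q i * f i ≤ B) : worstCase p f φ ε ≤ B :=
  csSup_le ⟨_, p, mem_ball_self hp hp1 hφ1 hε, rfl⟩ (by rintro _ ⟨q, hq, rfl⟩; exact hB q hq)

theorem sq_sum_mul_sub_mean_le (hp : ∀ i, 0 < p i) (hp1 : ∑ i, p i = 1) (hq1 : ∑ i, q i = 1) :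
    (∑ i, q i * f i - mean p f) ^ 2 ≤ (∑ i, p i * (q i / p i - 1) ^ 2) * variance p f := by
  have hrepr : ∑ i, q i * f i - mean p f = ∑ i, p i * (q i / p i - 1) * (f i - mean p f) := by
    have hpq : ∀ i, p i * (q i / p i - 1) = q i - p i := fun i => by
      field_simp [(hp i).ne']
    simp only [hpq, sub_mul, mul_sub, Finset.sum_sub_distrib, ← Finset.sum_mul, hq1, hp1, mean]
    ring
  rw [hrepr]
  exact Finset.sum_sq_le_sum_mul_sum_of_sq_le_mul _
    (fun i _ => mul_nonneg (hp i).le (sq_nonneg _)) (fun i _ => mul_nonneg (hp i).le (sq_nonneg _))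
    (fun i _ => le_of_eq (by ring))

def tilt (p f : ι → ℝ) (t : ℝ) (i : ι) : ℝ := p i * (1 + t * (f i - mean p f))

theorem tilt_div (hp : ∀ i, 0 < p i) (t : ℝ) (i : ι) :
    tilt p f t i / p i = 1 + t * (f i - mean p f) := by
  rw [tilt, mul_div_cancel_left₀ _ (hp i).ne']

theorem sum_tilt_mul (hp1 : ∑ i, p i = 1) (t : ℝ) :
    ∑ i, tilt p f t i * f i = mean p f + t * variance p f := by
  have hsplit : ∀ i, tilt p f t i * f i = p i * f i + t * (p i * (f i - mean p f) ^ 2)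
      + t * mean p f * (p i * (f i - mean p f)) := fun i => by
    simp only [tilt]; ring
  simp only [hsplit, Finset.sum_add_distrib, ← Finset.mul_sum, sum_mul_sub_mean_eq_zero hp1]
  simp only [mean, variance]
  ring

theorem tilt_mem_ball (hp : ∀ i, 0 < p i) (hp1 : ∑ i, p i = 1) {t a : ℝ}
    (hpos : ∀ i, 0 ≤ 1 + t * (f i - mean p f))
    (hφ : ∀ i, φ (1 + t * (f i - mean p f)) ≤ a / 2 * (1 + t * (f i - mean p f) - 1) ^ 2) :
    tilt p f t ∈ ball p φ (a / 2 * t ^ 2 * variance p f) := by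
  refine ⟨⟨?_, fun i => mul_nonneg (hp i).le (hpos i)⟩, ?_⟩
  · simp only [tilt, mul_add, mul_one, Finset.sum_add_distrib, mul_left_comm (p _) t,
      ← Finset.mul_sum, sum_mul_sub_mean_eq_zero hp1, hp1]
    ring
  · calc ∑ i, p i * φ (tilt p f t i / p i)
        ≤ ∑ i, p i * (a / 2 * (1 + t * (f i - mean p f) - 1) ^ 2) := by
          gcongr with i
          · exact (hp i).le
          · rw [tilt_div hp]; exact hφ i
      _ = a / 2 * t ^ 2 * variance p f := by
          simp only [variance, Finset.mul_sum]
          exact Finset.sum_congr rfl fun i _ => by ring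

theorem min_le_of_convexOn (hφ : ConvexOn ℝ (Ici 0) φ) (hφ1 : φ 1 = 0) {c δ t : ℝ} (hc : 0 ≤ c)
    (hδ : 0 < δ)     (hloc : ∀ s, |s - 1| ≤ δ → c * (s - 1) ^ 2 ≤ φ s) (ht : 0 ≤ t) :
    min (c * (t - 1) ^ 2) (c * δ ^ 2) ≤ φ t := by
  rcases le_or_gt |t - 1| δ with hnear | hfar
  · exact (min_le_left _ _).trans (hloc t hnear)
  refine (min_le_right _ _).trans ?_
  rcases lt_abs.1 hfar with hright | hleft
  · have hedge := hloc (1 + δ) (by simp [abs_of_pos hδ])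
    simp only [add_sub_cancel_left] at hedge
    refine hedge.trans (hφ.le_right_of_left_le (x := 1) (by simp) ht ?_ ?_)
    · rw [openSegment_eq_Ioo (by linarith)]; constructor <;> linarith
    · rw [hφ1]; exact (by positivity : 0 ≤ c * δ ^ 2).trans hedge
  · have hedge := hloc (1 - δ) (by simp [abs_of_pos hδ])
    simp only [sub_sub_cancel_left, neg_sq] at hedge
    refine hedge.trans (hφ.le_left_of_right_le (y := 1) ht (by simp) ?_ ?_)
    · rw [openSegment_eq_Ioo (by linarith)]; constructor <;> linarith
    · rw [hφ1]; exact (by positivity : 0 ≤ c * δ ^ 2).trans hedge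

theorem chiSq_le_of_mem_ball (hp : ∀ i, 0 < p i) {c m : ℝ} (hc : 0 ≤ c) (hm : 0 ≤ m)
    (hgauge : ∀ t, 0 ≤ t → min (c * (t - 1) ^ 2) m ≤ φ t) (hε : ∀ i, ε < p i * m)
    (hq : q ∈ ball p φ ε) : c * ∑ i, p i * (q i / p i - 1) ^ 2 ≤ ε := by
  obtain ⟨⟨-, hq0⟩, hdiv⟩ := hq
  have hw0 : ∀ i, 0 ≤ q i / p i := fun i => div_nonneg (hq0 i) (hp i).le
  have hterm0 : ∀ i, 0 ≤ p i * φ (q i / p i) := fun i =>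
    mul_nonneg (hp i).le ((le_min_iff.2 ⟨by positivity, hm⟩).trans (hgauge _ (hw0 i)))
  have hnear : ∀ i, c * (q i / p i - 1) ^ 2 ≤ φ (q i / p i) := by
    intro i
    rcases min_cases (c * (q i / p i - 1) ^ 2) m with ⟨hmin, -⟩ | ⟨hmin, -⟩
    · rw [← hmin]; exact hgauge _ (hw0 i)
    · have hfar : p i * m ≤ p i * φ (q i / p i) := by
        gcongr
        · exact (hp i).le
        · rw [← hmin]; exact hgauge _ (hw0 i)
      have := Finset.single_le_sum (fun j _ => hterm0 j) (Finset.mem_univ i)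
      linarith [hε i]
  calc c * ∑ i, p i * (q i / p i - 1) ^ 2 = ∑ i, p i * (c * (q i / p i - 1) ^ 2) := by
        rw [Finset.mul_sum]; exact Finset.sum_congr rfl fun i _ => by ring
    _ ≤ ∑ i, p i * φ (q i / p i) := by gcongr with i; exacts [(hp i).le, hnear i]
    _ ≤ ε := hdiv

theorem eventually_worstCase_div_sqrt_le (hp : ∀ i, 0 < p i) (hp1 : ∑ i, p i = 1)
    (hφ : ConvexOn ℝ (Ici 0) φ) (hφ1 : φ 1 = 0) {b : ℝ} (hb : 0 < b)
    (hloc : ∀ᶠ t in 𝓝 1, b / 2 * (t - 1) ^ 2 ≤ φ t) :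
    ∀ᶠ ε in 𝓝[>] 0, (worstCase p f φ ε - mean p f) / √ε ≤ √(2 * variance p f / b) := by
  obtain ⟨δ, hδ, hδloc⟩ := Metric.nhds_basis_closedBall.eventually_iff.1 hloc
  have hgauge : ∀ t, 0 ≤ t → min (b / 2 * (t - 1) ^ 2) (b / 2 * δ ^ 2) ≤ φ t :=
    fun t => min_le_of_convexOn hφ hφ1 (by positivity) hδ
      fun s hs => hδloc (by rwa [Metric.mem_closedBall, Real.dist_eq])
  have hsmall : ∀ᶠ ε in 𝓝[>] (0 : ℝ), ∀ i, ε < p i * (b / 2 * δ ^ 2) :=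
    eventually_all.2 fun i => nhdsWithin_le_nhds (gt_mem_nhds (by have := hp i; positivity))
  filter_upwards [hsmall, self_mem_nhdsWithin] with ε hε (hε0 : 0 < ε)
  have hV := variance_nonneg (f := f) fun i => (hp i).le
  rw [div_le_iff₀ (Real.sqrt_pos.2 hε0), ← Real.sqrt_mul (by positivity), sub_le_iff_le_add']
  refine worstCase_le hp hp1 hφ1 hε0.le fun q hq => ?_
  have hchi := chiSq_le_of_mem_ball hp (by positivity) (by positivity) hgauge hε hq
  rw [← sub_le_iff_le_add']
  refine Real.le_sqrt_of_sq_le ?_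
  calc (∑ i, q i * f i - mean p f) ^ 2
      ≤ (∑ i, p i * (q i / p i - 1) ^ 2) * variance p f := sq_sum_mul_sub_mean_le hp hp1 hq.1.1
    _ ≤ 2 * ε / b * variance p f := by
        gcongr
        rw [le_div_iff₀ hb]; linarith
    _ = 2 * variance p f / b * ε := by ring

theorem eventually_le_worstCase_div_sqrt (hp : ∀ i, 0 < p i) (hp1 : ∑ i, p i = 1)
    (hV : 0 < variance p f) {a : ℝ} (ha : 0 < a)
    (hloc : ∀ᶠ t in 𝓝 1, φ t ≤ a / 2 * (t - 1) ^ 2) :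
    ∀ᶠ ε in 𝓝[>] 0, √(2 * variance p f / a) ≤ (worstCase p f φ ε - mean p f) / √ε := by
  set τ : ℝ → ℝ := fun ε => √(2 * ε / (a * variance p f))
  have hτ : Tendsto τ (𝓝[>] 0) (𝓝 0) := by
    refine tendsto_nhdsWithin_of_tendsto_nhds ?_
    have : Continuous τ := by fun_prop
    simpa [τ] using this.tendsto 0
  have hnear : ∀ᶠ t in 𝓝 0, ∀ i, 0 ≤ 1 + t * (f i - mean p f) ∧
      φ (1 + t * (f i - mean p f)) ≤ a / 2 * (1 + t * (f i - mean p f) - 1) ^ 2 := by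
    refine eventually_all.2 fun i => ?_
    have hlin : Tendsto (fun t : ℝ => 1 + t * (f i - mean p f)) (𝓝 0) (𝓝 1) := by
      have : Continuous (fun t : ℝ => 1 + t * (f i - mean p f)) := by fun_prop
      simpa using this.tendsto 0
    exact hlin.eventually ((eventually_ge_nhds one_pos).and hloc)
  filter_upwards [hτ.eventually hnear, self_mem_nhdsWithin] with ε hε (hε0 : 0 < ε)
  have hmem := tilt_mem_ball hp hp1 (fun i => (hε i).1) (fun i => (hε i).2)
  have hradius : a / 2 * τ ε ^ 2 * variance p f = ε := by
    simp only [τ]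
    rw [Real.sq_sqrt (by positivity)]
    field_simp
  rw [hradius] at hmem
  have hvalue := le_worstCase (f := f) hmem
  rw [sum_tilt_mul hp1] at hvalue
  rw [le_div_iff₀ (Real.sqrt_pos.2 hε0)]
  calc √(2 * variance p f / a) * √ε = √(2 * ε / (a * variance p f) * variance p f ^ 2) := by
        rw [← Real.sqrt_mul (by positivity)]
        congr 1
        field_simp
    _ = τ ε * variance p f := by rw [Real.sqrt_mul (by positivity), Real.sqrt_sq hV.le]
    _ ≤ worstCase p f φ ε - mean p f := by linarith

end PhiDivergence

open PhiDivergence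

theorem stmt2_general (n : ℕ) (p f : Fin n → ℝ)
    (hp1 : ∑ i, p i = 1) (hp : ∀ i, 0 < p i)
    (hf : ∃ i j, f i ≠ f j)
    (φ : ℝ → ℝ) (hφconv : StrictConvexOn ℝ (Set.Ici (0 : ℝ)) φ)
    (hφC2 : ContDiffOn ℝ 2 φ (Set.Ioi (0 : ℝ)))
    (hφ1 : φ 1 = 0) (hφ'1 : deriv φ 1 = 0) (hφ''1 : 0 < deriv (deriv φ) 1) :
    Tendsto (fun ε : ℝ =>
        (sSup ((fun q : Fin n → ℝ => ∑ i, q i * f i) ''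
            {q : Fin n → ℝ | (∑ i, q i = 1 ∧ ∀ i, 0 ≤ q i) ∧
              ∑ i, p i * φ (q i / p i) ≤ ε})
          - ∑ i, p i * f i) / Real.sqrt ε)
      (nhdsWithin 0 (Set.Ioi 0))
      (nhds (Real.sqrt (2 * (∑ i, p i * (f i - ∑ j, p j * f j) ^ 2)
          / deriv (deriv φ) 1))) := by
  set κ := deriv (deriv φ) 1
  have hV := variance_pos hp hf
  have hquad : (fun t => φ t - κ / 2 * (t - 1) ^ 2) =o[𝓝 1] fun t => (t - 1) ^ 2 := by
    simpa [hφ1, hφ'1] using isLittleO_sub_taylor_two (Ioi_mem_nhds one_pos) hφC2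
  have hlimit (σ : ℝ) : Tendsto (fun η => √(2 * variance p f / (κ + σ * η))) (𝓝 0)
      (𝓝 √(2 * variance p f / κ)) := by
    have : ContinuousAt (fun η => √(2 * variance p f / (κ + σ * η))) 0 := by
      fun_prop (disch := simp [hφ''1.ne'])
    simpa using this.tendsto
  have hpos : ∀ᶠ η in 𝓝[>] (0 : ℝ), 0 < η := self_mem_nhdsWithin
  change Tendsto (fun ε => (worstCase p f φ ε - mean p f) / √ε) (𝓝[>] 0)
    (𝓝 √(2 * variance p f / κ))
  refine tendsto_order.2 ⟨fun c hc => ?_, fun c hc => ?_⟩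
  · obtain ⟨η, hcη, hη⟩ := (((hlimit 1).eventually (lt_mem_nhds hc)).filter_mono
      nhdsWithin_le_nhds |>.and hpos).exists
    have hupper := (eventually_quadratic_bounds hquad hη).mono fun _ h => h.2
    filter_upwards [eventually_le_worstCase_div_sqrt hp hp1 hV (by positivity) hupper] with ε hε
    exact (by simpa using hcη : c < _).trans_le hε
  · obtain ⟨η, ⟨hcη, hηκ⟩, hη⟩ := (((hlimit (-1)).eventually (gt_mem_nhds hc)).and
      (gt_mem_nhds hφ''1) |>.filter_mono nhdsWithin_le_nhds |>.and hpos).exists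
    have hlower := (eventually_quadratic_bounds hquad hη).mono fun _ h => h.1
    filter_upwards [eventually_worstCase_div_sqrt_le hp hp1 hφconv.convexOn hφ1 (by linarith)
      hlower] with ε hε
    exact hε.trans_lt (by simpa [← sub_eq_add_neg] using hcη)

/-- worst-case sensitivity of the smooth φ-divergence DRO model:
`lim_{ε ↓ 0} (V_φ(ε) − E_p f)/√ε = √(2 V_p(f)/φ''(1))`. -/
theorem stmt2 (n : ℕ) (hn : 2 ≤ n) (p f : Fin n → ℝ)
    (hp1 : ∑ i, p i = 1) (hp : ∀ i, 0 < p i)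
    (hf : ∃ i j, f i ≠ f j)
    (φ : ℝ → ℝ) (hφconv : StrictConvexOn ℝ (Set.Ici (0 : ℝ)) φ)
    (hφC2 : ContDiffOn ℝ 2 φ (Set.Ioi (0 : ℝ)))
    (hφ1 : φ 1 = 0) (hφ'1 : deriv φ 1 = 0) (hφ''1 : 0 < deriv (deriv φ) 1) :
    Tendsto (fun ε : ℝ =>
        (sSup ((fun q : Fin n → ℝ => ∑ i, q i * f i) ''
            {q : Fin n → ℝ | (∑ i, q i = 1 ∧ ∀ i, 0 ≤ q i) ∧
              ∑ i, p i * φ (q i / p i) ≤ ε})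
          - ∑ i, p i * f i) / Real.sqrt ε)
      (nhdsWithin 0 (Set.Ioi 0))
      (nhds (Real.sqrt (2 * (∑ i, p i * (f i - ∑ j, p j * f j) ^ 2)
          / deriv (deriv φ) 1))) :=
  stmt2_general n p f hp1 hp hf φ hφconv hφC2 hφ1 hφ'1 hφ''1
end

section
/- Take φ(z) = (z − 1)²/2 (modified χ²-divergence). Let f ∈ ℝⁿ be nonconstant and ε ≥ 0, and define qᵢ(ε) := pᵢ (1 + √(2ε / V_p(f)) (fᵢ − E_p(f))) for each i. If qᵢ(ε) ≥ 0 for all i, then q(ε) ∈ Δₙ, it satisfies Σᵢ pᵢ φ(qᵢ(ε)/pᵢ) = ε, and it attains the worst-case value: max{Σᵢ qᵢ fᵢ : q ∈ Δₙ, Σᵢ pᵢ φ(qᵢ/pᵢ) ≤ ε} = E_p(f) + √(2 ε V_p(f)). -/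
/-- for modified χ²-divergence `φ(z) = (z−1)²/2`, the explicit vector
`qᵢ(ε) = pᵢ(1 + √(2ε/V_p(f)) (fᵢ − E_p f))` (when nonnegative) lies in the simplex,
saturates the divergence constraint, and attains the worst-case value
`E_p(f) + √(2 ε V_p(f))`. -/
theorem stmt3 (n : ℕ) (hn : 2 ≤ n) (p f : Fin n → ℝ)
    (hp1 : ∑ i, p i = 1) (hp : ∀ i, 0 < p i)
    (hf : ∃ i j, f i ≠ f j)
    (ε : ℝ) (hε : 0 ≤ ε)
    (Ef : ℝ) (hEf : Ef = ∑ i, p i * f i)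
    (Vf : ℝ) (hVf : Vf = ∑ i, p i * (f i - Ef) ^ 2)
    (qε : Fin n → ℝ)
    (hq : ∀ i, qε i = p i * (1 + Real.sqrt (2 * ε / Vf) * (f i - Ef)))
    (hqnn : ∀ i, 0 ≤ qε i) :
    (∑ i, qε i = 1) ∧
    (∑ i, p i * ((qε i / p i - 1) ^ 2 / 2) = ε) ∧
    IsGreatest ((fun q : Fin n → ℝ => ∑ i, q i * f i) ''
        {q : Fin n → ℝ | (∑ i, q i = 1 ∧ ∀ i, 0 ≤ q i) ∧
          ∑ i, p i * ((q i / p i - 1) ^ 2 / 2) ≤ ε})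
      (Ef + Real.sqrt (2 * ε * Vf)) ∧
    (∑ i, qε i * f i = Ef + Real.sqrt (2 * ε * Vf)) := by
  have hVpos : 0 < Vf := by
    obtain ⟨i, j, hij⟩ := hf
    have h : f i ≠ Ef ∨ f j ≠ Ef := by
      by_contra h; push_neg at h; exact hij (h.1.trans h.2.symm)
    rw [hVf]
    rcases h with h | h
    · refine Finset.sum_pos' (fun k _ => mul_nonneg (hp k).le (sq_nonneg _))
        ⟨i, Finset.mem_univ i, mul_pos (hp i) ?_⟩
      have hne : f i - Ef ≠ 0 := sub_ne_zero.mpr h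
      exact (sq_nonneg _).lt_of_ne (fun hcon => hne (by simpa using (pow_eq_zero_iff (n := 2) (by norm_num)).mp hcon.symm))
    · refine Finset.sum_pos' (fun k _ => mul_nonneg (hp k).le (sq_nonneg _))
        ⟨j, Finset.mem_univ j, mul_pos (hp j) ?_⟩
      have hne : f j - Ef ≠ 0 := sub_ne_zero.mpr h
      exact (sq_nonneg _).lt_of_ne (fun hcon => hne (by simpa using (pow_eq_zero_iff (n := 2) (by norm_num)).mp hcon.symm))
  set t := Real.sqrt (2 * ε / Vf) with ht
  have ht2 : t ^ 2 = 2 * ε / Vf := Real.sq_sqrt (by positivity)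
  have hsum0 : ∑ i, p i * (f i - Ef) = 0 := by
    have : ∑ i, p i * (f i - Ef) = (∑ i, p i * f i) - Ef * ∑ i, p i := by
      rw [Finset.mul_sum, ← Finset.sum_sub_distrib]
      exact Finset.sum_congr rfl fun i _ => by ring
    rw [this, hp1, ← hEf]; ring
  have hsumf : ∑ i, p i * (f i - Ef) * f i = Vf := by
    have : ∀ i, p i * (f i - Ef) * f i = p i * (f i - Ef) ^ 2 + Ef * (p i * (f i - Ef)) := by
      intro i; ring
    rw [Finset.sum_congr rfl fun i _ => this i, Finset.sum_add_distrib, ← Finset.mul_sum,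
      hsum0, ← hVf]; ring
  have htVf : t * Vf = Real.sqrt (2 * ε * Vf) := by
    have : t * Vf = Real.sqrt (2 * ε / Vf) * Real.sqrt (Vf ^ 2) := by
      rw [Real.sqrt_sq hVpos.le]
    rw [this, ← Real.sqrt_mul (by positivity)]
    congr 1
    field_simp
  have part1 : ∑ i, qε i = 1 := by
    have : ∀ i, qε i = p i + t * (p i * (f i - Ef)) := fun i => by rw [hq i]; ring
    rw [Finset.sum_congr rfl fun i _ => this i, Finset.sum_add_distrib, ← Finset.mul_sum,
      hsum0, hp1]; ring
  have hratio : ∀ i, qε i / p i - 1 = t * (f i - Ef) := by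
    intro i
    rw [hq i, mul_div_cancel_left₀ _ (hp i).ne']
    ring
  have part2 : ∑ i, p i * ((qε i / p i - 1) ^ 2 / 2) = ε := by
    have : ∀ i, p i * ((qε i / p i - 1) ^ 2 / 2) = t ^ 2 / 2 * (p i * (f i - Ef) ^ 2) := by
      intro i; rw [hratio i]; ring
    rw [Finset.sum_congr rfl fun i _ => this i, ← Finset.mul_sum, ← hVf, ht2]
    field_simp
  have part4 : ∑ i, qε i * f i = Ef + Real.sqrt (2 * ε * Vf) := by
    have : ∀ i, qε i * f i = p i * f i + t * (p i * (f i - Ef) * f i) := by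
      intro i; rw [hq i]; ring
    rw [Finset.sum_congr rfl fun i _ => this i, Finset.sum_add_distrib, ← Finset.mul_sum,
      hsumf, ← hEf, htVf]
  refine ⟨part1, part2, ⟨⟨qε, ⟨⟨part1, hqnn⟩, le_of_eq part2⟩, part4⟩, ?_⟩, part4⟩
  rintro x ⟨q, ⟨⟨hq1, hq0⟩, hqd⟩, rfl⟩
  -- Cauchy-Schwarz upper bound
  have key : ∑ i, q i * f i - Ef = ∑ i, (Real.sqrt (p i) * (q i / p i - 1)) *
      (Real.sqrt (p i) * (f i - Ef)) := by
    have : ∀ i, (Real.sqrt (p i) * (q i / p i - 1)) * (Real.sqrt (p i) * (f i - Ef))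
        = (q i - p i) * (f i - Ef) := by
      intro i
      have hs : Real.sqrt (p i) * Real.sqrt (p i) = p i := Real.mul_self_sqrt (hp i).le
      calc (Real.sqrt (p i) * (q i / p i - 1)) * (Real.sqrt (p i) * (f i - Ef))
          = (Real.sqrt (p i) * Real.sqrt (p i)) * ((q i / p i - 1) * (f i - Ef)) := by ring
        _ = p i * ((q i / p i - 1) * (f i - Ef)) := by rw [hs]
        _ = (q i - p i) * (f i - Ef) := by
            have hne := (hp i).ne'
            field_simp
    rw [Finset.sum_congr rfl fun i _ => this i]
    have expand : ∑ i, (q i - p i) * (f i - Ef)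
        = ((∑ i, q i * f i) - Ef * (∑ i, q i)) - ((∑ i, p i * f i) - Ef * (∑ i, p i)) := by
      rw [Finset.mul_sum, Finset.mul_sum, ← Finset.sum_sub_distrib, ← Finset.sum_sub_distrib,
        ← Finset.sum_sub_distrib]
      exact Finset.sum_congr rfl fun i _ => by ring
    rw [expand, hq1, ← hEf, hp1]
    ring
  have cs := Real.sum_mul_le_sqrt_mul_sqrt Finset.univ
      (fun i => Real.sqrt (p i) * (q i / p i - 1)) (fun i => Real.sqrt (p i) * (f i - Ef))
  have hA : ∑ i, (Real.sqrt (p i) * (q i / p i - 1)) ^ 2 = ∑ i, p i * (q i / p i - 1) ^ 2 := by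
    refine Finset.sum_congr rfl fun i _ => ?_
    rw [mul_pow, Real.sq_sqrt (hp i).le]
  have hB : ∑ i, (Real.sqrt (p i) * (f i - Ef)) ^ 2 = Vf := by
    rw [hVf]
    refine Finset.sum_congr rfl fun i _ => ?_
    rw [mul_pow, Real.sq_sqrt (hp i).le]
  have hA2 : ∑ i, p i * (q i / p i - 1) ^ 2 ≤ 2 * ε := by
    have : ∑ i, p i * (q i / p i - 1) ^ 2 = 2 * ∑ i, p i * ((q i / p i - 1) ^ 2 / 2) := by
      rw [Finset.mul_sum]; exact Finset.sum_congr rfl fun i _ => by ring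
    rw [this]; linarith
  have hle : ∑ i, q i * f i - Ef ≤ Real.sqrt (2 * ε) * Real.sqrt Vf := by
    rw [key]
    refine cs.trans ?_
    rw [hA, hB]
    gcongr
  have hs2 : Real.sqrt (2 * ε) * Real.sqrt Vf = Real.sqrt (2 * ε * Vf) :=
    (Real.sqrt_mul (by positivity) _).symm
  rw [hs2] at hle
  linarith
end

section
/- Let f ∈ ℝⁿ be a nonconstant cost vector and let ε ∈ (0, minᵢ pᵢ). Then the worst-case expected cost over the Total Variation uncertainty set satisfies V_TV(ε; f) := max{Σᵢ qᵢ fᵢ : q ∈ Δₙ, Σᵢ |qᵢ − pᵢ| ≤ ε} = E_p(f) + (ε/2)(maxᵢ fᵢ − minᵢ fᵢ), and the maximum is attained by q* = p + (ε/2)(e^{i₁} − e^{i₀}), where i₁ is an index with f_{i₁} = maxᵢ fᵢ, i₀ is an index with f_{i₀} = minᵢ fᵢ, and e^{i} denotes the i-th standard basis vector. -/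
/-- the Total Variation worst-case expected cost equals
`E_p(f) + (ε/2)(max f − min f)` for small ε, attained at
`q* = p + (ε/2)(e^{i₁} − e^{i₀})`. -/
theorem stmt5 (n : ℕ) (hn : 2 ≤ n) (p f : Fin n → ℝ)
    (hp1 : ∑ i, p i = 1) (hp : ∀ i, 0 < p i)
    (hf : ∃ i j, f i ≠ f j)
    (ε : ℝ) (hε0 : 0 < ε) (hεp : ∀ i, ε < p i)
    (i₁ i₀ : Fin n) (hi₁ : ∀ i, f i ≤ f i₁) (hi₀ : ∀ i, f i₀ ≤ f i) :
    let QTV : Set (Fin n → ℝ) :=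
      {q | (∑ i, q i = 1 ∧ ∀ i, 0 ≤ q i) ∧ ∑ i, |q i - p i| ≤ ε}
    let qstar : Fin n → ℝ := fun i =>
      p i + ε / 2 * ((if i = i₁ then 1 else 0) - (if i = i₀ then 1 else 0))
    IsGreatest ((fun q : Fin n → ℝ => ∑ i, q i * f i) '' QTV)
      ((∑ i, p i * f i) + ε / 2 * (f i₁ - f i₀)) ∧
    qstar ∈ QTV ∧
    (∑ i, qstar i * f i) = (∑ i, p i * f i) + ε / 2 * (f i₁ - f i₀) := by
  intro QTV qstar
  -- f i₀ < f i₁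
  have hlt : f i₀ < f i₁ := by
    rcases (hi₀ i₁).lt_or_eq with h | h
    · exact h
    · obtain ⟨i, j, hij⟩ := hf
      have h1 : f i = f i₁ := le_antisymm (hi₁ i) (h ▸ hi₀ i)
      have h2 : f j = f i₁ := le_antisymm (hi₁ j) (h ▸ hi₀ j)
      exact absurd (h1.trans h2.symm) hij
  have hne : i₁ ≠ i₀ := fun h => absurd (h ▸ rfl) hlt.ne'
  -- value at qstar
  have hval : (∑ i, qstar i * f i) = (∑ i, p i * f i) + ε / 2 * (f i₁ - f i₀) := by
    have : ∀ i, qstar i * f i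
        = p i * f i + ε / 2 * ((if i = i₁ then f i₁ else 0) - (if i = i₀ then f i₀ else 0)) := by
      intro i
      simp only [qstar]
      split_ifs with h1 h2 h2 <;> subst_vars <;> ring
    simp only [this, Finset.sum_add_distrib, mul_sub, Finset.sum_sub_distrib,
      ← Finset.mul_sum]
    simp [Finset.sum_ite_eq', mul_sub]
  -- qstar ∈ QTV
  have hmem : qstar ∈ QTV := by
    refine ⟨⟨?_, ?_⟩, ?_⟩
    · have : ∀ i, qstar i = p i + ((if i = i₁ then ε / 2 else 0) - (if i = i₀ then ε / 2 else 0)) := by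
        intro i; simp only [qstar]; split_ifs <;> ring
      simp only [this, Finset.sum_add_distrib, Finset.sum_sub_distrib]
      rw [Finset.sum_ite_eq' Finset.univ i₁ (fun _ => ε / 2),
        Finset.sum_ite_eq' Finset.univ i₀ (fun _ => ε / 2)]
      simp [hp1]
    · intro i
      simp only [qstar]
      split_ifs <;> [linarith [hp i, hε0]; linarith [hp i, hε0]; linarith [hεp i]; linarith [hp i]]
    · have : ∀ i, |qstar i - p i|
          = (if i = i₁ then ε / 2 else 0) + (if i = i₀ then ε / 2 else 0) := by
        intro i
        simp only [qstar]
        split_ifs with h1 h2 h2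
        · exact absurd (h1.symm.trans h2) hne
        · rw [abs_of_nonneg] <;> ring_nf <;> linarith
        · rw [abs_of_nonpos] <;> ring_nf <;> linarith
        · simp
      simp only [this, Finset.sum_add_distrib]
      rw [Finset.sum_ite_eq' Finset.univ i₁ (fun _ => ε / 2),
        Finset.sum_ite_eq' Finset.univ i₀ (fun _ => ε / 2)]
      simp
  refine ⟨⟨⟨qstar, hmem, hval⟩, ?_⟩, hmem, hval⟩
  -- upper bound
  rintro v ⟨q, ⟨⟨hq1, hq0⟩, hqtv⟩, rfl⟩
  set c : ℝ := (f i₁ + f i₀) / 2 with hc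
  set M : ℝ := (f i₁ - f i₀) / 2 with hM
  have hM0 : 0 ≤ M := by simp only [hM]; linarith
  have hterm : ∀ i ∈ Finset.univ, q i * f i ≤ p i * f i + (q i - p i) * c + |q i - p i| * M := by
    intro i _
    have habs : |f i - c| ≤ M := abs_le.2 ⟨by simp only [hc, hM]; linarith [hi₀ i], by simp only [hc, hM]; linarith [hi₁ i]⟩
    have h1 : (q i - p i) * (f i - c) ≤ |q i - p i| * M :=
      calc (q i - p i) * (f i - c) ≤ |(q i - p i) * (f i - c)| := le_abs_self _
        _ = |q i - p i| * |f i - c| := abs_mul _ _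
        _ ≤ |q i - p i| * M := mul_le_mul_of_nonneg_left habs (abs_nonneg _)
    nlinarith [h1]
  calc ∑ i, q i * f i ≤ ∑ i, (p i * f i + (q i - p i) * c + |q i - p i| * M) :=
        Finset.sum_le_sum hterm
    _ = (∑ i, p i * f i) + (∑ i, (q i - p i)) * c + (∑ i, |q i - p i|) * M := by
        rw [Finset.sum_add_distrib, Finset.sum_add_distrib, Finset.sum_mul, Finset.sum_mul]
    _ = (∑ i, p i * f i) + (∑ i, |q i - p i|) * M := by
        rw [Finset.sum_sub_distrib, hq1, hp1]; ring
    _ ≤ (∑ i, p i * f i) + ε * M := by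
        have := mul_le_mul_of_nonneg_right hqtv hM0
        linarith
    _ = (∑ i, p i * f i) + ε / 2 * (f i₁ - f i₀) := by simp only [hM]; ring
end

section
/- Let σ be a permutation of {1,…,n} sorting the costs in descending order, f_(1) ≥ f_(2) ≥ ⋯ ≥ f_(n) with f_(i) := f_{σ(i)} and p_(i) := p_{σ(i)}. Let k ∈ {1,…,n−1} and ε ≥ 0 satisfy Σ_{i=k+2}^{n} p_(i) ≤ ε · Σ_{i=1}^{k+1} p_(i) and ε · Σ_{i=1}^{k} p_(i) ≤ Σ_{i=k+1}^{n} p_(i) (so the top–k saturation regime holds). Then the worst-case expected cost over the budgeted uncertainty set equals V_b(ε; f) := max{Σᵢ qᵢ fᵢ : q ∈ Q_b(ε)} = (1+ε) Σ_{i=1}^{k} p_(i) f_(i) + (1 − (1+ε) Σ_{i=1}^{k} p_(i)) f_(k+1), and this value is attained by the distribution putting mass (1+ε)p_(i) on f_(i) for i = 1,…,k, mass 1 − (1+ε)Σ_{i=1}^{k} p_(i) on f_(k+1), and 0 elsewhere. -/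
/-!
The maximization is a fractional knapsack: the greedy distribution fills the capacities
`(1 + ε) p` along the costs in decreasing order and puts the leftover mass on the first cost it
cannot fill. The regime inequalities say exactly that this happens at sorted position `k`. Any
feasible `q` is beaten by the greedy one through an exchange argument around the threshold cost
`f_(k+1)`: the greedy distribution has at least as much mass as `q` above the threshold and at
most as much below it, and both have total mass `1`.
-/

open Finset

section CappedSimplex

variable {ι : Type*} [Fintype ι]

def cappedSimplex (u : ι → ℝ) : Set (ι → ℝ) :=
  {q | (∑ i, q i = 1 ∧ ∀ i, 0 ≤ q i) ∧ ∀ i, q i ≤ u i}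

theorem sum_mul_le_sum_mul_of_sub_mul_sub_nonneg {q q' f : ι → ℝ} (c : ℝ)
    (hsum : ∑ i, q i = ∑ i, q' i) (h : ∀ i, 0 ≤ (q' i - q i) * (f i - c)) :
    ∑ i, q i * f i ≤ ∑ i, q' i * f i := by
  have key : 0 ≤ ∑ i, (q' i - q i) * (f i - c) := sum_nonneg fun i _ => h i
  have expand : ∑ i, (q' i - q i) * (f i - c)
      = ∑ i, q' i * f i - ∑ i, q i * f i - c * (∑ i, q' i - ∑ i, q i) := by
    simp only [sub_mul, mul_sub, sum_sub_distrib, ← sum_mul]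
    ring
  rw [expand, hsum, sub_self, mul_zero, sub_zero] at key
  linarith

variable [DecidableEq ι]

def greedyFill (u : ι → ℝ) (T : Finset ι) (m : ι) (j : ι) : ℝ :=
  if j ∈ T then u j else if j = m then 1 - ∑ i ∈ T, u i else 0

variable {u : ι → ℝ} {T : Finset ι} {m : ι}

theorem sum_greedyFill_mul (hm : m ∉ T) (g : ι → ℝ) :
    ∑ j, greedyFill u T m j * g j = ∑ i ∈ T, u i * g i + (1 - ∑ i ∈ T, u i) * g m := by
  rw [← sum_filter_add_sum_filter_not univ (· ∈ T)]
  congr 1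
  · exact sum_congr (by ext; simp) fun j hj => by simp [greedyFill, hj]
  · rw [sum_eq_single_of_mem m (by simpa using hm) fun j hj hjm => by
      simp [greedyFill, (mem_filter.1 hj).2, hjm]]
    simp [greedyFill, hm]

theorem sum_greedyFill (hm : m ∉ T) : ∑ j, greedyFill u T m j = 1 := by
  simpa using sum_greedyFill_mul (u := u) hm 1

theorem greedyFill_mem_cappedSimplex (hm : m ∉ T) (hu : ∀ j, 0 ≤ u j)
    (hT : ∑ i ∈ T, u i ≤ 1) (hTm : 1 ≤ ∑ i ∈ T, u i + u m) :
    greedyFill u T m ∈ cappedSimplex u := by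
  refine ⟨⟨sum_greedyFill hm, fun j => ?_⟩, fun j => ?_⟩ <;> unfold greedyFill <;>
    split_ifs with hjT hjm
  · exact hu j
  · linarith
  · rfl
  · rfl
  · rw [hjm]; linarith
  · exact hu j

theorem isGreatest_sum_greedyFill_mul {f : ι → ℝ} (hm : m ∉ T) (hu : ∀ j, 0 ≤ u j)
    (hT : ∑ i ∈ T, u i ≤ 1) (hTm : 1 ≤ ∑ i ∈ T, u i + u m)
    (hfT : ∀ j ∈ T, f m ≤ f j) (hfT' : ∀ j ∉ T, f j ≤ f m) :
    IsGreatest ((fun q => ∑ i, q i * f i) '' cappedSimplex u)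
      (∑ j, greedyFill u T m j * f j) := by
  refine ⟨⟨_, greedyFill_mem_cappedSimplex hm hu hT hTm, rfl⟩, ?_⟩
  rintro _ ⟨q, ⟨⟨hq1, hq0⟩, hqu⟩, rfl⟩
  refine sum_mul_le_sum_mul_of_sub_mul_sub_nonneg (f m) (by rw [hq1, sum_greedyFill hm])
    fun j => ?_
  unfold greedyFill
  split_ifs with hjT hjm
  · exact mul_nonneg (sub_nonneg.2 (hqu j)) (sub_nonneg.2 (hfT j hjT))
  · simp [hjm]
  · exact mul_nonneg_of_nonpos_of_nonpos (by linarith [hq0 j]) (sub_nonpos.2 (hfT' j hjT))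

end CappedSimplex

section SortedSums

variable {α : Type*} [Fintype α] [LinearOrder α] {w : α → ℝ} {ε : ℝ}

theorem sum_filter_le_eq_add_sum_filter_lt (k : α) :
    ∑ i with i ≤ k, w i = w k + ∑ i with i < k, w i := by
  have hins : univ.filter (· ≤ k) = insert k (univ.filter (· < k)) := by
    ext i; simp [le_iff_lt_or_eq, or_comm]
  rw [hins, sum_insert (by simp)]

theorem one_add_mul_sum_filter_lt_le_one (hw : ∑ i, w i = 1) {k : α}
    (h : ε * ∑ i with i < k, w i ≤ ∑ i with k ≤ i, w i) :
    (1 + ε) * ∑ i with i < k, w i ≤ 1 := by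
  have hsplit := sum_filter_add_sum_filter_not univ (· < k) w
  simp only [not_lt] at hsplit
  linarith

theorem one_le_one_add_mul_sum_filter_le (hw : ∑ i, w i = 1) {k : α}
    (h : ∑ i with k < i, w i ≤ ε * ∑ i with i ≤ k, w i) :
    1 ≤ (1 + ε) * ∑ i with i ≤ k, w i := by
  have hsplit := sum_filter_add_sum_filter_not univ (· ≤ k) w
  simp only [not_le] at hsplit
  linarith

end SortedSums

theorem stmt6_general (n : ℕ) (p f : Fin n → ℝ)
    (hp1 : ∑ i, p i = 1) (hp : ∀ i, 0 < p i)
    (σ : Equiv.Perm (Fin n)) (hσ : ∀ i j : Fin n, i ≤ j → f (σ j) ≤ f (σ i))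
    (k : Fin n)
    (ε : ℝ) (hε : 0 ≤ ε)
    (h1 : (∑ i ∈ Finset.univ.filter (fun i : Fin n => (k : ℕ) < (i : ℕ)), p (σ i))
          ≤ ε * ∑ i ∈ Finset.univ.filter (fun i : Fin n => (i : ℕ) ≤ (k : ℕ)), p (σ i))
    (h2 : ε * (∑ i ∈ Finset.univ.filter (fun i : Fin n => (i : ℕ) < (k : ℕ)), p (σ i))
          ≤ ∑ i ∈ Finset.univ.filter (fun i : Fin n => (k : ℕ) ≤ (i : ℕ)), p (σ i)) :
    let topk : Finset (Fin n) := Finset.univ.filter (fun i : Fin n => (i : ℕ) < (k : ℕ))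
    let Qb : Set (Fin n → ℝ) :=
      {q | (∑ i, q i = 1 ∧ ∀ i, 0 ≤ q i) ∧ ∀ i, q i ≤ (1 + ε) * p i}
    let val : ℝ := (1 + ε) * (∑ i ∈ topk, p (σ i) * f (σ i))
      + (1 - (1 + ε) * ∑ i ∈ topk, p (σ i)) * f (σ k)
    let qstar : Fin n → ℝ := fun j =>
      if ((σ.symm j : Fin n) : ℕ) < (k : ℕ) then (1 + ε) * p j
      else if σ.symm j = k then 1 - (1 + ε) * ∑ i ∈ topk, p (σ i)
      else 0
    IsGreatest ((fun q : Fin n → ℝ => ∑ i, q i * f i) '' Qb) val ∧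
    qstar ∈ Qb ∧ (∑ j, qstar j * f j) = val := by
  intro topk Qb val qstar
  simp only [Fin.val_fin_lt, Fin.val_fin_le] at h1 h2
  have htopk : topk = univ.filter (· < k) := by simp [topk]
  set T := topk.map σ.toEmbedding
  have hkT : σ k ∉ T := by simp [T, topk]
  have hsumT (g : Fin n → ℝ) : ∑ j ∈ T, g j = ∑ i ∈ topk, g (σ i) := sum_map _ _ _
  have hpσ : ∑ i, p (σ i) = 1 := by rw [Equiv.sum_comp, hp1]
  have hT : ∑ j ∈ T, (1 + ε) * p j ≤ 1 := by
    rw [hsumT, ← mul_sum, htopk]; exact one_add_mul_sum_filter_lt_le_one hpσ h2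
  have hTk : 1 ≤ ∑ j ∈ T, (1 + ε) * p j + (1 + ε) * p (σ k) := by
    have := one_le_one_add_mul_sum_filter_le hpσ h1
    rw [sum_filter_le_eq_add_sum_filter_lt] at this
    rw [hsumT, ← mul_sum, htopk]; linarith
  have hq : qstar = greedyFill (fun j => (1 + ε) * p j) T (σ k) := by
    funext j; simp [qstar, greedyFill, T, topk, Equiv.symm_apply_eq, mul_sum]
  have hval : ∑ j, qstar j * f j = val := by
    rw [hq, sum_greedyFill_mul hkT, hsumT, hsumT]; simp [val, topk, mul_sum, mul_assoc]
  have hu (j : Fin n) : 0 ≤ (1 + ε) * p j := by have := hp j; positivity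
  refine ⟨?_, ?_, hval⟩
  · rw [← hval, hq]
    refine isGreatest_sum_greedyFill_mul hkT hu hT hTk (fun j hj => ?_) fun j hj => ?_
    · obtain ⟨i, hi, rfl⟩ := mem_map.1 hj
      exact hσ i k (le_of_lt (by simpa [topk] using hi))
    · simpa using hσ k (σ.symm j) (by simpa [T, topk] using hj)
  · rw [hq]; exact greedyFill_mem_cappedSimplex hkT hu hT hTk

/-- in the top-k saturation regime, the budgeted-uncertainty worst-case
expected cost equals `(1+ε) Σ_{i≤k} p_(i) f_(i) + (1 − (1+ε) Σ_{i≤k} p_(i)) f_(k+1)`,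
attained by the distribution saturating the top k sorted costs.
(Sorted positions are 0-indexed: `f_(i+1) = f (σ i)`, so position `k : Fin n` with
`1 ≤ k` is the `(k+1)`-st largest cost.) -/
theorem stmt6 (n : ℕ) (hn : 2 ≤ n) (p f : Fin n → ℝ)
    (hp1 : ∑ i, p i = 1) (hp : ∀ i, 0 < p i)
    (σ : Equiv.Perm (Fin n)) (hσ : ∀ i j : Fin n, i ≤ j → f (σ j) ≤ f (σ i))
    (k : Fin n) (hk1 : 1 ≤ (k : ℕ)) (hk2 : (k : ℕ) ≤ n - 1)
    (ε : ℝ) (hε : 0 ≤ ε)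
    (h1 : (∑ i ∈ Finset.univ.filter (fun i : Fin n => (k : ℕ) < (i : ℕ)), p (σ i))
          ≤ ε * ∑ i ∈ Finset.univ.filter (fun i : Fin n => (i : ℕ) ≤ (k : ℕ)), p (σ i))
    (h2 : ε * (∑ i ∈ Finset.univ.filter (fun i : Fin n => (i : ℕ) < (k : ℕ)), p (σ i))
          ≤ ∑ i ∈ Finset.univ.filter (fun i : Fin n => (k : ℕ) ≤ (i : ℕ)), p (σ i)) :
    let topk : Finset (Fin n) := Finset.univ.filter (fun i : Fin n => (i : ℕ) < (k : ℕ))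
    let Qb : Set (Fin n → ℝ) :=
      {q | (∑ i, q i = 1 ∧ ∀ i, 0 ≤ q i) ∧ ∀ i, q i ≤ (1 + ε) * p i}
    let val : ℝ := (1 + ε) * (∑ i ∈ topk, p (σ i) * f (σ i))
      + (1 - (1 + ε) * ∑ i ∈ topk, p (σ i)) * f (σ k)
    let qstar : Fin n → ℝ := fun j =>
      if ((σ.symm j : Fin n) : ℕ) < (k : ℕ) then (1 + ε) * p j
      else if σ.symm j = k then 1 - (1 + ε) * ∑ i ∈ topk, p (σ i)
      else 0
    IsGreatest ((fun q : Fin n → ℝ => ∑ i, q i * f i) '' Qb) val ∧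
    qstar ∈ Qb ∧ (∑ j, qstar j * f j) = val :=
  stmt6_general n p f hp1 hp σ hσ k ε hε h1 h2
end

section
/- Let σ sort costs descending with f_(n) = minᵢ fᵢ and p_(n) := p_{σ(n)}. Then for every ε with 0 ≤ ε ≤ p_(n) / (1 − p_(n)), the worst-case expected cost over the budgeted uncertainty set satisfies the exact identity V_b(ε; f) = E_p(f) + ε · (E_p(f) − minᵢ fᵢ). In particular, lim_{ε ↓ 0} (V_b(ε; f) − E_p(f))/ε = E_p(f) − minᵢ fᵢ, i.e., the worst-case sensitivity of the budgeted uncertainty set is the lower range E_p(f) − min(f). -/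
open Filter

/-- for `0 ≤ ε ≤ p_(n)/(1 − p_(n))`, the budgeted-uncertainty worst-case
cost satisfies `V_b(ε) = E_p(f) + ε (E_p(f) − min f)`; in particular, the worst-case
sensitivity is `E_p(f) − min f`. Here σ sorts costs in descending order and
`last` is the sorted position of the minimum (so `f (σ last) = min f`). -/
theorem stmt8 (n : ℕ) (hn : 2 ≤ n) (p f : Fin n → ℝ)
    (hp1 : ∑ i, p i = 1) (hp : ∀ i, 0 < p i)
    (σ : Equiv.Perm (Fin n)) (hσ : ∀ i j : Fin n, i ≤ j → f (σ j) ≤ f (σ i))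
    (last : Fin n) (hlast : (last : ℕ) = n - 1)
    (hpn : p (σ last) < 1) :
    let Vb : ℝ → ℝ := fun e => sSup ((fun q : Fin n → ℝ => ∑ i, q i * f i) ''
      {q : Fin n → ℝ | (∑ i, q i = 1 ∧ ∀ i, 0 ≤ q i) ∧ ∀ i, q i ≤ (1 + e) * p i})
    let E : ℝ := ∑ i, p i * f i
    (∀ ε : ℝ, 0 ≤ ε → ε ≤ p (σ last) / (1 - p (σ last)) →
      Vb ε = E + ε * (E - f (σ last))) ∧
    Tendsto (fun ε : ℝ => (Vb ε - E) / ε) (nhdsWithin 0 (Set.Ioi 0))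
      (nhds (E - f (σ last))) := by
  intro Vb E
  set m := f (σ last) with hm
  have hmin : ∀ i, m ≤ f i := by
    intro i
    have h1 : σ.symm i ≤ last := by
      have := (σ.symm i).isLt
      rw [Fin.le_def, hlast]
      omega
    have h2 := hσ (σ.symm i) last h1
    simpa using h2
  have hpn' : 0 < 1 - p (σ last) := by linarith
  have key : ∀ ε : ℝ, 0 ≤ ε → ε ≤ p (σ last) / (1 - p (σ last)) →
      Vb ε = E + ε * (E - m) := by
    intro ε hε0 hε1
    have hεc : ε * (1 - p (σ last)) ≤ p (σ last) := by
      rw [← le_div_iff₀ hpn']; exact hε1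
    -- upper bound for all members
    have hub : ∀ x ∈ ((fun q : Fin n → ℝ => ∑ i, q i * f i) ''
        {q : Fin n → ℝ | (∑ i, q i = 1 ∧ ∀ i, 0 ≤ q i) ∧ ∀ i, q i ≤ (1 + ε) * p i}),
        x ≤ E + ε * (E - m) := by
      rintro x ⟨q, ⟨⟨hq1, _⟩, hq3⟩, rfl⟩
      have h1 : ∑ i, q i * (f i - m) ≤ ∑ i, (1 + ε) * p i * (f i - m) := by
        apply Finset.sum_le_sum
        intro i _
        exact mul_le_mul_of_nonneg_right (hq3 i) (by linarith [hmin i])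
      have h2 : ∑ i, q i * (f i - m) = (∑ i, q i * f i) - m := by
        simp only [mul_sub]
        rw [Finset.sum_sub_distrib, ← Finset.sum_mul, hq1, one_mul]
      have h3 : ∑ i, (1 + ε) * p i * (f i - m) = (1 + ε) * (E - m) := by
        simp only [mul_sub, mul_assoc]
        rw [Finset.sum_sub_distrib, ← Finset.mul_sum, ← Finset.mul_sum,
          ← Finset.sum_mul, hp1]
        ring
      rw [h2, h3] at h1
      linarith
    -- the maximizing q
    set q : Fin n → ℝ := fun i => (1 + ε) * p i - if i = σ last then ε else 0 with hq
    have hqmem : q ∈ {q : Fin n → ℝ | (∑ i, q i = 1 ∧ ∀ i, 0 ≤ q i) ∧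
        ∀ i, q i ≤ (1 + ε) * p i} := by
      refine ⟨⟨?_, ?_⟩, ?_⟩
      · rw [hq]
        rw [Finset.sum_sub_distrib, ← Finset.mul_sum, hp1]
        simp
      · intro i
        by_cases h : i = σ last
        · simp only [hq, h, if_pos rfl, if_true]
          nlinarith [hp (σ last)]
        · simp only [hq, if_neg h]
          nlinarith [hp i]
      · intro i
        simp only [hq]
        by_cases h : i = σ last <;> simp [h] <;> linarith
    have hqval : ∑ i, q i * f i = E + ε * (E - m) := by
      simp only [hq, sub_mul, ite_mul, zero_mul]
      rw [Finset.sum_sub_distrib]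
      rw [Finset.sum_ite_eq' Finset.univ (σ last) (fun i => ε * f i)]
      simp only [Finset.mem_univ, if_pos, mul_assoc]
      rw [← Finset.mul_sum]
      show (1 + ε) * E - ε * m = E + ε * (E - m)
      ring
    have hne : ((fun q : Fin n → ℝ => ∑ i, q i * f i) ''
        {q : Fin n → ℝ | (∑ i, q i = 1 ∧ ∀ i, 0 ≤ q i) ∧
          ∀ i, q i ≤ (1 + ε) * p i}).Nonempty := ⟨_, ⟨q, hqmem, rfl⟩⟩
    have hbdd : BddAbove ((fun q : Fin n → ℝ => ∑ i, q i * f i) ''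
        {q : Fin n → ℝ | (∑ i, q i = 1 ∧ ∀ i, 0 ≤ q i) ∧
          ∀ i, q i ≤ (1 + ε) * p i}) := ⟨E + ε * (E - m), hub⟩
    apply le_antisymm
    · exact csSup_le hne hub
    · rw [← hqval]
      exact le_csSup hbdd ⟨q, hqmem, rfl⟩
  refine ⟨key, ?_⟩
  have hc : 0 < p (σ last) / (1 - p (σ last)) :=
    div_pos (hp (σ last)) hpn'
  have hev : (fun ε : ℝ => (Vb ε - E) / ε) =ᶠ[nhdsWithin 0 (Set.Ioi 0)]
      fun _ => E - m := by
    filter_upwards [Ioo_mem_nhdsGT_of_mem ⟨le_refl (0:ℝ), hc⟩] with ε hε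
    rw [key ε hε.1.le hε.2.le]
    field_simp
    rw [add_sub_cancel_left]
    exact mul_div_cancel_left₀ _ (ne_of_gt hε.1)
  exact Tendsto.congr' hev.symm tendsto_const_nhds
end

section
/- Let α ∈ [0,1) and ε ∈ [0,1]. Then the convex-combination uncertainty set admits the box description: {(1−ε)p + εq : q ∈ Q_CVaR(α)} = {r ∈ ℝⁿ : Σᵢ rᵢ = 1 and (1−ε)pᵢ ≤ rᵢ ≤ (1−ε)pᵢ + (ε/(1−α))pᵢ for all i}. -/
/-!
For `ε > 0` the map `q ↦ (1 - ε) p + ε q` is an affine bijection with inverse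
`r ↦ (r - (1 - ε) p) / ε`, and this inverse turns `Σ q = 1`, `0 ≤ qᵢ` and `qᵢ ≤ pᵢ / (1 - α)`
into `Σ r = 1` and the two box constraints on `rᵢ`. For `ε = 0` both sides collapse to `{p}`;
on the left this needs `Q_CVaR(α)` to be nonempty, and it contains `p` itself.
-/

open Finset

lemma mem_image_affine_iff {ι : Type*} {ε : ℝ} (hε : ε ≠ 0) (a : ι → ℝ) (S : Set (ι → ℝ))
    (r : ι → ℝ) :
    r ∈ (fun q : ι → ℝ => fun i => a i + ε * q i) '' S ↔ (fun i => (r i - a i) / ε) ∈ S := by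
  constructor
  · rintro ⟨q, hq, rfl⟩
    convert hq using 2 with i
    field_simp
    ring
  · exact fun h => ⟨_, h, funext fun i => by field_simp; ring⟩

lemma sub_div_nonneg_iff {x a ε : ℝ} (hε : 0 < ε) : 0 ≤ (x - a) / ε ↔ a ≤ x := by
  rw [le_div_iff₀ hε, zero_mul, sub_nonneg]

lemma sub_div_le_iff {x a ε y : ℝ} (hε : 0 < ε) : (x - a) / ε ≤ y ↔ x ≤ a + ε * y := by
  rw [div_le_iff₀ hε, sub_le_iff_le_add', mul_comm]

section

variable {ι : Type*} [Fintype ι]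

def cvarSet (p : ι → ℝ) (α : ℝ) : Set (ι → ℝ) :=
  {q | (∑ i, q i = 1 ∧ ∀ i, 0 ≤ q i) ∧ ∀ i, q i ≤ p i / (1 - α)}

lemma self_mem_cvarSet {p : ι → ℝ} (hp1 : ∑ i, p i = 1) (hp : ∀ i, 0 ≤ p i) {α : ℝ}
    (hα0 : 0 ≤ α) (hα1 : α < 1) : p ∈ cvarSet p α :=
  ⟨⟨hp1, hp⟩, fun i => le_div_self (hp i) (by linarith) (by linarith)⟩

lemma sum_sub_div_eq_one_iff {p r : ι → ℝ} (hp1 : ∑ i, p i = 1) {ε : ℝ} (hε : ε ≠ 0) :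
    ∑ i, (r i - (1 - ε) * p i) / ε = 1 ↔ ∑ i, r i = 1 := by
  rw [← sum_div, sum_sub_distrib, ← mul_sum, hp1, div_eq_one_iff_eq hε, mul_one, sub_eq_iff_eq_add,
    add_sub_cancel]

theorem image_cvarSet_of_pos {p : ι → ℝ} (hp1 : ∑ i, p i = 1) {α ε : ℝ} (hε : 0 < ε) :
    (fun q : ι → ℝ => fun i => (1 - ε) * p i + ε * q i) '' cvarSet p α
      = {r : ι → ℝ | ∑ i, r i = 1 ∧
        ∀ i, (1 - ε) * p i ≤ r i ∧ r i ≤ (1 - ε) * p i + (ε / (1 - α)) * p i} := by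
  ext r
  rw [mem_image_affine_iff hε.ne']
  simp only [cvarSet, Set.mem_ofPred_eq, and_assoc, ← forall_and, sum_sub_div_eq_one_iff hp1 hε.ne',
    sub_div_nonneg_iff hε, sub_div_le_iff hε, mul_div_assoc', div_mul_eq_mul_div]

theorem image_cvarSet_of_eq_zero {p : ι → ℝ} (hp1 : ∑ i, p i = 1) (hp : ∀ i, 0 ≤ p i) {α ε : ℝ}
    (hα0 : 0 ≤ α) (hα1 : α < 1) (hε : ε = 0) :
    (fun q : ι → ℝ => fun i => (1 - ε) * p i + ε * q i) '' cvarSet p α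
      = {r : ι → ℝ | ∑ i, r i = 1 ∧
        ∀ i, (1 - ε) * p i ≤ r i ∧ r i ≤ (1 - ε) * p i + (ε / (1 - α)) * p i} := by
  subst hε
  simp only [sub_zero, one_mul, zero_mul, add_zero, zero_div, ← le_antisymm_iff]
  rw [Set.Nonempty.image_const ⟨p, self_mem_cvarSet hp1 hp hα0 hα1⟩]
  ext r
  constructor
  · rintro rfl
    exact ⟨hp1, fun _ => rfl⟩
  · rintro ⟨-, h⟩
    exact funext fun i => (h i).symm

end

theorem stmt10_general (n : ℕ) (p : Fin n → ℝ)
    (hp1 : ∑ i, p i = 1) (hp : ∀ i, 0 < p i)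
    (α : ℝ) (hα0 : 0 ≤ α) (hα1 : α < 1)
    (ε : ℝ) (hε0 : 0 ≤ ε) :
    (fun q : Fin n → ℝ => fun i => (1 - ε) * p i + ε * q i) ''
      {q : Fin n → ℝ | (∑ i, q i = 1 ∧ ∀ i, 0 ≤ q i) ∧ ∀ i, q i ≤ p i / (1 - α)}
    = {r : Fin n → ℝ | ∑ i, r i = 1 ∧
        ∀ i, (1 - ε) * p i ≤ r i ∧ r i ≤ (1 - ε) * p i + (ε / (1 - α)) * p i} := by
  rcases hε0.eq_or_lt with hε | hε
  · exact image_cvarSet_of_eq_zero hp1 (fun i => (hp i).le) hα0 hα1 hε.symm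
  · exact image_cvarSet_of_pos hp1 hε

/-- box description of the convex-combination uncertainty set:
`{(1−ε)p + εq : q ∈ Q_CVaR(α)} = {r : Σᵢ rᵢ = 1, (1−ε)pᵢ ≤ rᵢ ≤ (1−ε)pᵢ + (ε/(1−α))pᵢ}`. -/
theorem stmt10 (n : ℕ) (hn : 1 ≤ n) (p : Fin n → ℝ)
    (hp1 : ∑ i, p i = 1) (hp : ∀ i, 0 < p i)
    (α : ℝ) (hα0 : 0 ≤ α) (hα1 : α < 1)
    (ε : ℝ) (hε0 : 0 ≤ ε) (hε1 : ε ≤ 1) :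
    (fun q : Fin n → ℝ => fun i => (1 - ε) * p i + ε * q i) ''
      {q : Fin n → ℝ | (∑ i, q i = 1 ∧ ∀ i, 0 ≤ q i) ∧ ∀ i, q i ≤ p i / (1 - α)}
    = {r : Fin n → ℝ | ∑ i, r i = 1 ∧
        ∀ i, (1 - ε) * p i ≤ r i ∧ r i ≤ (1 - ε) * p i + (ε / (1 - α)) * p i} :=
  stmt10_general n p hp1 hp α hα0 hα1 ε hε0
end

section
/- Let n ≥ 2 and let p = (1/n,…,1/n) be the uniform probability vector. Then for every f ∈ ℝⁿ and every ε ≥ 0, the worst-case expected cost over the budgeted uncertainty set satisfies V_b(ε; f) := max{Σᵢ qᵢ fᵢ : q ∈ Δₙ, qᵢ ≤ (1+ε)/n for all i} ≤ E_p(f) + √ε · √(V_p(f)). -/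
/-!
Write `q = p + a`. The budget constraints confine each `aᵢ` to `[-1/n, ε/n]` while `∑ aᵢ = 0`,
which forces `∑ aᵢ² ≤ ε/n`. Since `∑ aᵢ = 0`, the excess `∑ qᵢ fᵢ - E_p(f)` equals
`∑ aᵢ (fᵢ - E_p(f))`, and Cauchy–Schwarz bounds it by `√(ε/n) · √(n V_p(f)) = √ε √(V_p(f))`.
-/

open Finset

/-- A discrete Bhatia–Davis inequality: `(u - aᵢ)(aᵢ + l) ≥ 0` gives
`aᵢ² ≤ (u - l) aᵢ + l u`, and the linear terms cancel after summing. -/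
theorem Finset.sum_sq_le_card_mul_of_sum_eq_zero {ι : Type*} (s : Finset ι) {a : ι → ℝ}
    {l u : ℝ} (hsum : ∑ i ∈ s, a i = 0) (hl : ∀ i ∈ s, -l ≤ a i) (hu : ∀ i ∈ s, a i ≤ u) :
    ∑ i ∈ s, a i ^ 2 ≤ #s * (l * u) :=
  calc ∑ i ∈ s, a i ^ 2 ≤ ∑ i ∈ s, ((u - l) * a i + l * u) :=
        sum_le_sum fun i hi => by nlinarith [hl i hi, hu i hi]
    _ = #s * (l * u) := by rw [sum_add_distrib, ← mul_sum, hsum, sum_const, nsmul_eq_mul]; ring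

theorem Finset.sum_mul_sub_eq_sum_mul {ι : Type*} (s : Finset ι) {a : ι → ℝ}
    (hsum : ∑ i ∈ s, a i = 0) (f : ι → ℝ) (c : ℝ) :
    ∑ i ∈ s, a i * (f i - c) = ∑ i ∈ s, a i * f i := by
  simp only [mul_sub, sum_sub_distrib, ← sum_mul, hsum, zero_mul, sub_zero]

section Budget

variable {ι : Type*} [Fintype ι]

/-- The budgeted uncertainty set around the uniform distribution `p`: probability vectors `q`
with `q ≤ (1 + ε) p`. -/
def budgetSet (ι : Type*) [Fintype ι] (ε : ℝ) : Set (ι → ℝ) :=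
  {q | (∑ i, q i = 1 ∧ ∀ i, 0 ≤ q i) ∧ ∀ i, q i ≤ (1 + ε) / Fintype.card ι}

theorem uniform_mem_budgetSet [Nonempty ι] {ε : ℝ} (hε : 0 ≤ ε) :
    (fun _ => 1 / (Fintype.card ι : ℝ)) ∈ budgetSet ι ε := by
  refine ⟨⟨?_, fun _ => by positivity⟩, fun _ => div_le_div_of_nonneg_right (by linarith) (by positivity)⟩
  rw [sum_const, card_univ, nsmul_eq_mul]
  field_simp

theorem card_ne_zero_of_sum_eq_one {q : ι → ℝ} (hsum : ∑ i, q i = 1) :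
    (Fintype.card ι : ℝ) ≠ 0 := by
  intro h
  simp only [Nat.cast_eq_zero, Fintype.card_eq_zero_iff] at h
  simp at hsum

theorem sum_sub_inv_card_eq_zero {q : ι → ℝ} (hsum : ∑ i, q i = 1) :
    ∑ i, (q i - 1 / Fintype.card ι) = 0 := by
  have hn := card_ne_zero_of_sum_eq_one hsum
  rw [sum_sub_distrib, hsum, sum_const, card_univ, nsmul_eq_mul]
  field_simp
  ring

theorem sum_sq_sub_inv_card_le_of_mem_budgetSet {q : ι → ℝ} {ε : ℝ} (hq : q ∈ budgetSet ι ε) :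
    ∑ i, (q i - 1 / Fintype.card ι) ^ 2 ≤ ε / Fintype.card ι := by
  obtain ⟨⟨hsum, hnonneg⟩, hbudget⟩ := hq
  set n : ℝ := (Fintype.card ι : ℝ)
  have hn : n ≠ 0 := card_ne_zero_of_sum_eq_one hsum
  calc ∑ i, (q i - 1 / n) ^ 2 ≤ n * (1 / n * (ε / n)) :=
        univ.sum_sq_le_card_mul_of_sum_eq_zero (sum_sub_inv_card_eq_zero hsum)
          (fun i _ => by linarith [hnonneg i]) (fun i _ => by linarith [hbudget i, add_div 1 ε n])
    _ = ε / n := by field_simp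

theorem sum_mul_le_of_mem_budgetSet {q : ι → ℝ} (f : ι → ℝ) {ε : ℝ} (hε : 0 ≤ ε)
    (hq : q ∈ budgetSet ι ε) :
    let E : ℝ := 1 / Fintype.card ι * ∑ i, f i
    let V : ℝ := 1 / Fintype.card ι * ∑ i, (f i - E) ^ 2
    ∑ i, q i * f i ≤ E + √ε * √V := by
  set n : ℝ := (Fintype.card ι : ℝ)
  intro E V
  have hn : n ≠ 0 := card_ne_zero_of_sum_eq_one hq.1.1
  have hexcess : ∑ i, q i * f i - E = ∑ i, (q i - 1 / n) * (f i - E) := by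
    rw [univ.sum_mul_sub_eq_sum_mul (sum_sub_inv_card_eq_zero hq.1.1)]
    simp only [sub_mul, sum_sub_distrib, ← mul_sum, E, n]
  have hdev : ∑ i, (f i - E) ^ 2 = n * V := by
    simp only [V]
    field_simp
  have := calc ∑ i, (q i - 1 / n) * (f i - E)
      ≤ √(∑ i, (q i - 1 / n) ^ 2) * √(∑ i, (f i - E) ^ 2) := Real.sum_mul_le_sqrt_mul_sqrt _ _ _
    _ ≤ √(ε / n) * √(n * V) := by
        rw [hdev]
        gcongr
        exact sum_sq_sub_inv_card_le_of_mem_budgetSet hq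
    _ = √ε * √V := by
        rw [← Real.sqrt_mul (by positivity), ← Real.sqrt_mul hε]
        congr 1
        field_simp
  linarith

end Budget

/-- for the uniform nominal distribution, the budgeted-uncertainty
worst-case expected cost satisfies `V_b(ε; f) ≤ E_p(f) + √ε √(V_p f)`. -/
theorem stmt13 (n : ℕ) (hn : 2 ≤ n) (f : Fin n → ℝ) (ε : ℝ) (hε : 0 ≤ ε) :
    let E : ℝ := (1 / (n : ℝ)) * ∑ i, f i
    let V : ℝ := (1 / (n : ℝ)) * ∑ i, (f i - E) ^ 2
    sSup ((fun q : Fin n → ℝ => ∑ i, q i * f i) ''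
        {q : Fin n → ℝ | (∑ i, q i = 1 ∧ ∀ i, 0 ≤ q i) ∧ ∀ i, q i ≤ (1 + ε) / n})
      ≤ E + Real.sqrt ε * Real.sqrt V := by
  have : NeZero n := ⟨by omega⟩
  have hbound := fun q => sum_mul_le_of_mem_budgetSet (q := q) f hε
  have hmem := uniform_mem_budgetSet (ι := Fin n) hε
  simp only [budgetSet, Fintype.card_fin] at hbound hmem
  exact csSup_le ⟨_, _, hmem, rfl⟩ fun _ ⟨q, hq, hq_eq⟩ => hq_eq ▸ hbound q hq
end

section
/- Let E be a nontrivial real normed vector space, let f : E → ℝ be concave, and let Y ∈ E be a point at which f is Fréchet differentiable with derivative f′(Y) ∈ E* (a continuous linear functional). Then sup_{z ∈ E, z ≠ Y} ( f(z) − f(Y) ) / ‖z − Y‖ = ‖f′(Y)‖, the operator (dual) norm of the derivative. In particular, for a Wasserstein uncertainty set and a concave differentiable cost, the worst-case sensitivity is maxᵢ ‖f′(Yᵢ)‖. -/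
/-!
Concavity keeps `f` below its tangent plane at `Y`, so every difference quotient is at most
`f' (z - Y) / ‖z - Y‖ ≤ ‖f'‖`. Conversely, if `M` bounds all difference quotients, letting `z`
tend to `Y` along `Y + t • v` gives `f' v ≤ M * ‖v‖` for every `v`, hence `‖f'‖ ≤ M`.
-/

section

variable {E : Type*} [NormedAddCommGroup E] [NormedSpace ℝ E] {f : E → ℝ} {f' : E →L[ℝ] ℝ}
  {x : E}

/-- On the segment from `x` to `y`, `f` is a concave function of one variable with derivative
`f' (y - x)` at `0`, and its chord over `[0, 1]` lies below that tangent. -/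
theorem ConcaveOn.sub_le_of_hasFDerivAt {s : Set E} (hf : ConcaveOn ℝ s f) (hx : x ∈ s)
    {y : E} (hy : y ∈ s) (hd : HasFDerivAt f f' x) : f y - f x ≤ f' (y - x) := by
  set ℓ : ℝ →ᵃ[ℝ] E := AffineMap.lineMap x y with hℓ
  have hconv : ConvexOn ℝ (ℓ ⁻¹' s) (-f ∘ ℓ) := (hf.comp_affineMap ℓ).neg
  have hderiv : HasDerivAt (-f ∘ ℓ) (-f' (y - x)) 0 := by
    refine (HasFDerivAt.comp_hasDerivAt (0 : ℝ) ?_ AffineMap.hasDerivAt_lineMap).neg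
    simpa using hd
  have := hconv.le_slope_of_hasDerivAt (by simpa [hℓ] using hx) (by simpa [hℓ] using hy)
    zero_lt_one hderiv
  simp only [slope, hℓ, Function.comp_apply, Pi.neg_apply, AffineMap.lineMap_apply_one,
    AffineMap.lineMap_apply_zero, vsub_eq_sub, sub_zero, inv_one, one_smul] at this
  linarith

theorem HasFDerivAt.apply_le_of_sub_le_mul_norm (hd : HasFDerivAt f f' x) {M : ℝ}
    (hM : ∀ y, f y - f x ≤ M * ‖y - x‖) (v : E) : f' v ≤ M * ‖v‖ := by
  refine le_of_tendsto ((hd.hasLineDerivAt v).tendsto_slope_zero_right) ?_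
  filter_upwards [self_mem_nhdsWithin] with t (ht : 0 < t)
  rw [smul_eq_mul, inv_mul_le_iff₀ ht]
  calc f (x + t • v) - f x ≤ M * ‖x + t • v - x‖ := hM _
    _ = t * (M * ‖v‖) := by rw [add_sub_cancel_left, norm_smul, Real.norm_of_nonneg ht.le]; ring

theorem HasFDerivAt.opNorm_le_of_sub_le_mul_norm [Nontrivial E] (hd : HasFDerivAt f f' x)
    {M : ℝ} (hM : ∀ y, f y - f x ≤ M * ‖y - x‖) : ‖f'‖ ≤ M := by
  have hbound (v : E) : |f' v| ≤ M * ‖v‖ := by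
    refine abs_le.2 ⟨?_, hd.apply_le_of_sub_le_mul_norm hM v⟩
    simpa [neg_le] using hd.apply_le_of_sub_le_mul_norm hM (-v)
  obtain ⟨v, hv⟩ := exists_ne (0 : E)
  have hM0 : 0 ≤ M := nonneg_of_mul_nonneg_left ((abs_nonneg _).trans (hbound v))
    (norm_pos_iff.2 hv)
  exact f'.opNorm_le_bound hM0 hbound

end

theorem stmt18_general (E : Type*) [NormedAddCommGroup E] [NormedSpace ℝ E]
    (f : E → ℝ) (hconc : ConcaveOn ℝ Set.univ f)
    (Y : E) (f' : E →L[ℝ] ℝ) (hdiff : HasFDerivAt f f' Y) :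
    sSup {r : ℝ | ∃ z : E, z ≠ Y ∧ r = (f z - f Y) / ‖z - Y‖} = ‖f'‖ := by
  rcases subsingleton_or_nontrivial E with _ | _
  · -- the set of quotients is empty, and `sSup ∅ = 0` in `ℝ`
    simp [Subsingleton.elim _ Y, f'.opNorm_subsingleton]
  obtain ⟨z₀, hz₀⟩ := exists_ne Y
  refine IsLUB.csSup_eq ⟨?_, fun M hM => ?_⟩ ⟨_, z₀, hz₀, rfl⟩
  · rintro _ ⟨z, hz, rfl⟩
    rw [div_le_iff₀ (norm_sub_pos_iff.2 hz)]
    exact (hconc.sub_le_of_hasFDerivAt trivial trivial hdiff).trans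
      ((le_abs_self _).trans (f'.le_opNorm _))
  · refine hdiff.opNorm_le_of_sub_le_mul_norm fun z => ?_
    rcases eq_or_ne z Y with rfl | hz
    · simp
    · exact (div_le_iff₀ (norm_sub_pos_iff.2 hz)).1 (hM ⟨z, hz, rfl⟩)

/-- for a concave `f : E → ℝ` Fréchet differentiable at `Y`,
the maximal difference quotient equals the dual norm of the derivative:
`sup_{z ≠ Y} (f z − f Y)/‖z − Y‖ = ‖f′(Y)‖`. -/
theorem stmt18 (E : Type*) [NormedAddCommGroup E] [NormedSpace ℝ E] [Nontrivial E]
    (f : E → ℝ) (hconc : ConcaveOn ℝ Set.univ f)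
    (Y : E) (f' : E →L[ℝ] ℝ) (hdiff : HasFDerivAt f f' Y) :
    sSup {r : ℝ | ∃ z : E, z ≠ Y ∧ r = (f z - f Y) / ‖z - Y‖} = ‖f'‖ :=
  stmt18_general E f hconc Y f' hdiff
end

section
/- Fix constants r, c, q, s ∈ ℝ with 0 ≤ q < c < r and s ≥ 0, and define the newsvendor cost f(x, y) := −r·min{x, y} − q·max{x − y, 0} + s·max{y − x, 0} + c·x for x, y ∈ ℝ. Then for every order quantity x ∈ ℝ and every demand point y ∈ ℝ, sup_{z ∈ ℝ, z ≠ y} ( f(x, z) − f(x, y) ) / |z − y| = max{ r − q, s }. Consequently, for any demand sample Y₁,…,Yₙ ∈ ℝ, the 1-Wasserstein worst-case sensitivity maxᵢ sup_{z ≠ Yᵢ} ( f(x, z) − f(x, Yᵢ) ) / |z − Yᵢ| equals max{ r − q, s }, independently of the order quantity x. -/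
set_option linter.unusedVariables false

lemma nv_bound (r c q s : ℝ) (hqc : q < c) (hcr : c < r) (hs : 0 ≤ s)
    (x z y : ℝ) :
    (-r * min x z - q * max (x - z) 0 + s * max (z - x) 0 + c * x)
      - (-r * min x y - q * max (x - y) 0 + s * max (y - x) 0 + c * x)
      ≤ max (r - q) s * |z - y| := by
  have hM1 : r - q ≤ max (r - q) s := le_max_left _ _
  have hM2 : s ≤ max (r - q) s := le_max_right _ _
  rcases le_total z x with h1 | h1 <;> rcases le_total y x with h2 | h2 <;>
    rcases abs_cases (z - y) with ⟨ha, hb⟩ | ⟨ha, hb⟩ <;>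
    rw [ha] <;>
    first
    | (rw [min_eq_right h1, min_eq_right h2, max_eq_left (sub_nonneg.2 h1),
        max_eq_left (sub_nonneg.2 h2), max_eq_right (sub_nonpos.2 h1),
        max_eq_right (sub_nonpos.2 h2)]; nlinarith)
    | (rw [min_eq_right h1, min_eq_left h2, max_eq_left (sub_nonneg.2 h1),
        max_eq_right (sub_nonpos.2 h2), max_eq_right (sub_nonpos.2 h1),
        max_eq_left (sub_nonneg.2 h2)]; nlinarith)
    | (rw [min_eq_left h1, min_eq_right h2, max_eq_right (sub_nonpos.2 h1),
        max_eq_left (sub_nonneg.2 h2), max_eq_left (sub_nonneg.2 h1),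
        max_eq_right (sub_nonpos.2 h2)]; nlinarith)
    | (rw [min_eq_left h1, min_eq_left h2, max_eq_right (sub_nonpos.2 h1),
        max_eq_right (sub_nonpos.2 h2), max_eq_left (sub_nonneg.2 h1),
        max_eq_left (sub_nonneg.2 h2)]; nlinarith)

lemma nv_isLUB (r c q s : ℝ) (hq0 : 0 ≤ q) (hqc : q < c) (hcr : c < r) (hs : 0 ≤ s)
    (f : ℝ → ℝ → ℝ)
    (hf : ∀ x y : ℝ, f x y = -r * min x y - q * max (x - y) 0 + s * max (y - x) 0 + c * x)
    (x y : ℝ) :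
    IsLUB {v : ℝ | ∃ z : ℝ, z ≠ y ∧ v = (f x z - f x y) / |z - y|} (max (r - q) s) := by
  constructor
  · rintro v ⟨z, hz, rfl⟩
    have habs : 0 < |z - y| := abs_pos.2 (sub_ne_zero.2 hz)
    rw [div_le_iff₀ habs, hf, hf]
    exact nv_bound r c q s hqc hcr hs x z y
  · rintro b hb
    have hrq : (0:ℝ) < r - q := by linarith
    have hrsq : (0:ℝ) < r + s - q := by linarith
    refine max_le ?_ ?_
    · -- r - q ≤ b
      by_contra hc
      push_neg at hc
      have hεb : 0 < r - q - b := by linarith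
      set D : ℝ := (q - r) * y + (c - q) * x - f x y with hDdef
      have hD : D ≤ 0 := by
        rcases le_total y x with h | h
        · rw [hDdef, hf, min_eq_right h, max_eq_left (sub_nonneg.2 h),
            max_eq_right (sub_nonpos.2 h)]
          nlinarith
        · rw [hDdef, hf, min_eq_left h, max_eq_right (sub_nonpos.2 h),
            max_eq_left (sub_nonneg.2 h)]
          nlinarith
      set t : ℝ := (-D) / (r - q - b) with htdef
      have ht : t * (r - q - b) = -D := div_mul_cancel₀ _ (ne_of_gt hεb)
      have ht0 : 0 ≤ t := div_nonneg (by linarith) (le_of_lt hεb)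
      set z : ℝ := min x y - t - 1 with hzdef
      have hzy : z < y := by
        have := min_le_right x y; simp only [hzdef]; linarith
      have hzx : z ≤ x := by
        have := min_le_left x y; simp only [hzdef]; linarith
      have hmem : (f x z - f x y) / |z - y| ≤ b :=
        hb ⟨z, ne_of_lt hzy, rfl⟩
      rw [abs_of_neg (by linarith : z - y < 0)] at hmem
      have hfz : f x z = (q - r) * z + (c - q) * x := by
        rw [hf, min_eq_right hzx, max_eq_left (sub_nonneg.2 hzx),
          max_eq_right (sub_nonpos.2 hzx)]
        ring
      rw [div_le_iff₀ (by linarith : (0:ℝ) < -(z - y))] at hmem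
      have hzt : t + 1 ≤ y - z := by
        have := min_le_right x y; simp only [hzdef]; linarith
      nlinarith [mul_le_mul_of_nonneg_left hzt (le_of_lt hεb)]
    · -- s ≤ b
      by_contra hc
      push_neg at hc
      have hεb : 0 < s - b := by linarith
      set E : ℝ := s * y + (c - r - s) * x - f x y with hEdef
      have hE : E ≤ 0 := by
        rcases le_total y x with h | h
        · rw [hEdef, hf, min_eq_right h, max_eq_left (sub_nonneg.2 h),
            max_eq_right (sub_nonpos.2 h)]
          nlinarith
        · rw [hEdef, hf, min_eq_left h, max_eq_right (sub_nonpos.2 h),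
            max_eq_left (sub_nonneg.2 h)]
          nlinarith
      set t : ℝ := (-E) / (s - b) with htdef
      have ht : t * (s - b) = -E := div_mul_cancel₀ _ (ne_of_gt hεb)
      have ht0 : 0 ≤ t := div_nonneg (by linarith) (le_of_lt hεb)
      set z : ℝ := max x y + t + 1 with hzdef
      have hzy : y < z := by
        have := le_max_right x y; simp only [hzdef]; linarith
      have hzx : x ≤ z := by
        have := le_max_left x y; simp only [hzdef]; linarith
      have hmem : (f x z - f x y) / |z - y| ≤ b :=
        hb ⟨z, ne_of_gt hzy, rfl⟩
      rw [abs_of_pos (by linarith : 0 < z - y)] at hmem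
      have hfz : f x z = s * z + (c - r - s) * x := by
        rw [hf, min_eq_left hzx, max_eq_right (sub_nonpos.2 hzx),
          max_eq_left (sub_nonneg.2 hzx)]
        ring
      rw [div_le_iff₀ (by linarith : (0:ℝ) < z - y)] at hmem
      have hzt : t + 1 ≤ z - y := by
        have := le_max_right x y; simp only [hzdef]; linarith
      nlinarith [mul_le_mul_of_nonneg_left hzt (le_of_lt hεb)]

/-- for the newsvendor cost
`f(x,y) = −r min{x,y} − q max{x−y,0} + s max{y−x,0} + c x` with `0 ≤ q < c < r`,
`s ≥ 0`, the maximal difference quotient in the demand variable is `max{r−q, s}`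
for every x and y; hence the 1-Wasserstein worst-case sensitivity
`maxᵢ sup_{z ≠ Yᵢ} (f(x,z) − f(x,Yᵢ))/|z − Yᵢ|` equals `max{r−q, s}`,
independently of the order quantity x. -/
theorem stmt19 (r c q s : ℝ) (hq0 : 0 ≤ q) (hqc : q < c) (hcr : c < r) (hs : 0 ≤ s)
    (f : ℝ → ℝ → ℝ)
    (hf : ∀ x y : ℝ, f x y = -r * min x y - q * max (x - y) 0 + s * max (y - x) 0 + c * x) :
    (∀ x y : ℝ,
      sSup {v : ℝ | ∃ z : ℝ, z ≠ y ∧ v = (f x z - f x y) / |z - y|} = max (r - q) s) ∧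
    (∀ (n : ℕ), 1 ≤ n → ∀ (Y : Fin n → ℝ) (x : ℝ),
      sSup {v : ℝ | ∃ (i : Fin n) (z : ℝ), z ≠ Y i ∧ v = (f x z - f x (Y i)) / |z - Y i|}
        = max (r - q) s) := by
  constructor
  · intro x y
    exact (nv_isLUB r c q s hq0 hqc hcr hs f hf x y).csSup_eq
      ⟨_, ⟨y + 1, by simp, rfl⟩⟩
  · intro n hn Y x
    have i0 : Fin n := ⟨0, by omega⟩
    have hlub : IsLUB {v : ℝ | ∃ (i : Fin n) (z : ℝ),
        z ≠ Y i ∧ v = (f x z - f x (Y i)) / |z - Y i|} (max (r - q) s) := by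
      constructor
      · rintro v ⟨i, z, hz, rfl⟩
        exact (nv_isLUB r c q s hq0 hqc hcr hs f hf x (Y i)).1 ⟨z, hz, rfl⟩
      · intro b hb
        exact (nv_isLUB r c q s hq0 hqc hcr hs f hf x (Y i0)).2
          (fun v ⟨z, hz, hv⟩ => hb ⟨i0, z, hz, hv⟩)
    exact hlub.csSup_eq ⟨_, ⟨i0, Y i0 + 1, by simp, rfl⟩⟩
end
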